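/- arXiv:0708.4272 — 7 statements merged into one kernel-verified Lean document; each statement's English description precedes it below -/
import Mathlib

section
/- For all real numbers a ≥ 0, b > 0, and p > 2, one has min(a, b) ≥ a − ((p−2)^(p−2) · a^(p−1)) / ((p−1)^(p−1) · b^(p−2)). -/
/-! For `a ≤ b` the subtracted term is nonnegative. For `a > b` the claim is the weighted AM-GM
inequality for `(p - 1)(a - b)` and `(p - 1) b / (p - 2)` with weights `1/(p - 1)` and
`(p - 2)/(p - 1)`, whose arithmetic mean is exactly `a`. -/

open Real

theorem rpow_add_one_mul_mul_rpow_le {s b q : ℝ} (hs : 0 ≤ s) (hb : 0 ≤ b) (hq : 0 < q) :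
    (q + 1) ^ (q + 1) * s * b ^ q ≤ q ^ q * (s + b) ^ (q + 1) := by
  have hq1 : 0 < q + 1 := by linarith
  set x := (q + 1) * s
  set y := (q + 1) / q * b
  have amgm : x ^ (1 / (q + 1)) * y ^ (q / (q + 1)) ≤ s + b := by
    calc x ^ (1 / (q + 1)) * y ^ (q / (q + 1))
        ≤ 1 / (q + 1) * x + q / (q + 1) * y :=
          geom_mean_le_arith_mean2_weighted (by positivity) (by positivity) (by positivity)
            (by positivity) (by field_simp; ring)
      _ = s + b := by simp only [x, y]; field_simp
  have gm_pow : (x ^ (1 / (q + 1)) * y ^ (q / (q + 1))) ^ (q + 1) = x * y ^ q := by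
    rw [mul_rpow (by positivity) (by positivity), ← rpow_mul (by positivity),
      ← rpow_mul (by positivity), one_div_mul_cancel hq1.ne', div_mul_cancel₀ _ hq1.ne',
      rpow_one]
  have key : x * y ^ q ≤ (s + b) ^ (q + 1) := by
    rw [← gm_pow]
    exact rpow_le_rpow (by positivity) amgm hq1.le
  have hxy : q ^ q * (x * y ^ q) = (q + 1) ^ (q + 1) * s * b ^ q := by
    have : 0 < q ^ q := rpow_pos_of_pos hq q
    rw [mul_rpow (by positivity) hb, div_rpow hq1.le hq.le, rpow_add_one hq1.ne']
    simp only [x]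
    field_simp
  rw [← hxy]
  exact mul_le_mul_of_nonneg_left key (by positivity)

theorem min_lower_bound (a b p : ℝ) (ha : 0 ≤ a) (hb : 0 < b) (hp : 2 < p) :
    min a b ≥ a - ((p - 2) ^ (p - 2) * a ^ (p - 1)) / ((p - 1) ^ (p - 1) * b ^ (p - 2)) := by
  have hq : 0 < p - 2 := by linarith
  have hden : 0 < (p - 1) ^ (p - 1) * b ^ (p - 2) := by
    have : 0 < p - 1 := by linarith
    positivity
  rcases le_or_gt a b with hab | hba
  · rw [min_eq_left hab]
    have : 0 ≤ (p - 2) ^ (p - 2) * a ^ (p - 1) / ((p - 1) ^ (p - 1) * b ^ (p - 2)) := by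
      positivity
    linarith
  · rw [min_eq_right hba.le, ge_iff_le, sub_le_comm, le_div_iff₀ hden]
    have key := rpow_add_one_mul_mul_rpow_le (sub_nonneg.2 hba.le) hb.le hq
    rw [sub_add_cancel, show p - 2 + 1 = p - 1 by ring] at key
    linarith
end

section
/- Let W and Δ be real random variables and let p > 0 with E|Δ|^p < ∞. Then sup over z of |P(W + Δ ≤ z) − Φ(z)| is at most sup over z of |P(W ≤ z) − Φ(z)| plus 2·(E|Δ|^p)^{1/(1+p)}, where Φ is the standard normal distribution function. -/
open MeasureTheory ProbabilityTheory Real NNReal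

/-- The standard gaussian pdf is bounded by 1. -/
lemma gaussianPDFReal_le_one (x : ℝ) : gaussianPDFReal 0 1 x ≤ 1 := by
  have hrw : gaussianPDFReal 0 1 x = (Real.sqrt (2 * π))⁻¹ * Real.exp (-x ^ 2 / 2) := by
    simp [gaussianPDFReal]
  rw [hrw]
  have hπ : (1 : ℝ) ≤ Real.sqrt (2 * π) := by
    rw [show (1:ℝ) = Real.sqrt 1 by simp]
    exact Real.sqrt_le_sqrt (by nlinarith [Real.pi_gt_three])
  have h1 : (Real.sqrt (2 * π))⁻¹ ≤ 1 := by
    rw [inv_le_one_iff₀]; right; exact hπ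
  have h2 : Real.exp (-x ^ 2 / 2) ≤ 1 := by
    rw [Real.exp_le_one_iff]
    nlinarith [sq_nonneg x]
  calc (Real.sqrt (2 * π))⁻¹ * Real.exp (-x ^ 2 / 2)
      ≤ 1 * 1 := mul_le_mul h1 h2 (Real.exp_nonneg _) zero_le_one
    _ = 1 := by ring

/-- Lipschitz property of the standard gaussian CDF. -/
lemma gauss_lip {a b : ℝ} (h : a ≤ b) :
    (gaussianReal 0 1 (Set.Iic b)).toReal ≤ (gaussianReal 0 1 (Set.Iic a)).toReal + (b - a) := by
  have hv : (1 : ℝ≥0) ≠ 0 := one_ne_zero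
  have hunion : Set.Iic b = Set.Iic a ∪ Set.Ioc a b := (Set.Iic_union_Ioc_eq_Iic h).symm
  have hdisj : Disjoint (Set.Iic a) (Set.Ioc a b) := by
    simp [Set.disjoint_left]
    intro x hx hx'
    linarith
  have hmeas : gaussianReal 0 1 (Set.Iic b)
      = gaussianReal 0 1 (Set.Iic a) + gaussianReal 0 1 (Set.Ioc a b) := by
    rw [hunion, measure_union hdisj measurableSet_Ioc]
  have hIoc : gaussianReal 0 1 (Set.Ioc a b) ≤ ENNReal.ofReal (b - a) := by
    rw [gaussianReal_apply 0 hv]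
    calc ∫⁻ x in Set.Ioc a b, gaussianPDF 0 1 x
        ≤ ∫⁻ _ in Set.Ioc a b, 1 := by
          refine lintegral_mono fun x => ?_
          rw [gaussianPDF]
          exact ENNReal.ofReal_le_one.mpr (gaussianPDFReal_le_one x)
      _ = volume (Set.Ioc a b) := by simp
      _ = ENNReal.ofReal (b - a) := by rw [Real.volume_Ioc]
  have hne : gaussianReal 0 1 (Set.Iic a) ≠ ⊤ := measure_ne_top _ _
  have hne2 : gaussianReal 0 1 (Set.Ioc a b) ≠ ⊤ := measure_ne_top _ _
  rw [hmeas, ENNReal.toReal_add hne hne2]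
  have := ENNReal.toReal_le_of_le_ofReal (by linarith : (0:ℝ) ≤ b - a) hIoc
  linarith

theorem nonlinear_cheby_bound {Ω : Type*} [MeasurableSpace Ω] (μ : Measure Ω)
    [IsProbabilityMeasure μ] (W Δ : Ω → ℝ) (hW : Measurable W) (hΔ : Measurable Δ)
    (p : ℝ) (hp : 0 < p) (hint : Integrable (fun ω => |Δ ω| ^ p) μ) (z : ℝ) :
    |(μ {ω | W ω + Δ ω ≤ z}).toReal - (gaussianReal 0 1 (Set.Iic z)).toReal| ≤
      (⨆ z' : ℝ, |(μ {ω | W ω ≤ z'}).toReal - (gaussianReal 0 1 (Set.Iic z')).toReal|) +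
        2 * (∫ ω, |Δ ω| ^ p ∂μ) ^ (1 / (1 + p)) := by
  set E : ℝ := ∫ ω, |Δ ω| ^ p ∂μ with hE
  have hEnn : 0 ≤ E := integral_nonneg fun ω => Real.rpow_nonneg (abs_nonneg _) p
  set δ : ℝ := E ^ (1 / (1 + p)) with hδ
  have hδnn : 0 ≤ δ := Real.rpow_nonneg hEnn _
  set S : ℝ := ⨆ z' : ℝ, |(μ {ω | W ω ≤ z'}).toReal - (gaussianReal 0 1 (Set.Iic z')).toReal|
    with hS
  -- boundedness of the range for ciSup
  have hbdd : BddAbove (Set.range fun z' =>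
      |(μ {ω | W ω ≤ z'}).toReal - (gaussianReal 0 1 (Set.Iic z')).toReal|) := by
    refine ⟨1, ?_⟩
    rintro x ⟨z', rfl⟩
    have h1 : (μ {ω | W ω ≤ z'}).toReal ≤ 1 := by
      rw [← ENNReal.toReal_one]
      exact ENNReal.toReal_mono ENNReal.one_ne_top prob_le_one
    have h2 : (gaussianReal 0 1 (Set.Iic z')).toReal ≤ 1 := by
      rw [← ENNReal.toReal_one]
      exact ENNReal.toReal_mono ENNReal.one_ne_top prob_le_one
    have h3 : 0 ≤ (μ {ω | W ω ≤ z'}).toReal := ENNReal.toReal_nonneg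
    have h4 : 0 ≤ (gaussianReal 0 1 (Set.Iic z')).toReal := ENNReal.toReal_nonneg
    rw [abs_le]; constructor <;> linarith
  have hle_S : ∀ z' : ℝ,
      |(μ {ω | W ω ≤ z'}).toReal - (gaussianReal 0 1 (Set.Iic z')).toReal| ≤ S :=
    fun z' => le_ciSup hbdd z'
  -- key Markov-type bound
  have hΔmeas : Measurable fun ω => |Δ ω| := hΔ.abs
  have hMarkov : (μ {ω | δ < |Δ ω|}).toReal ≤ δ := by
    rcases eq_or_lt_of_le hEnn with hE0 | hEpos
    · -- E = 0 case: Δ = 0 a.e.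
      have hδ0 : δ = 0 := by
        rw [hδ, ← hE0, Real.zero_rpow]
        positivity
      have hae : (fun ω => |Δ ω| ^ p) =ᵐ[μ] 0 := by
        rw [← integral_eq_zero_iff_of_nonneg (fun ω => Real.rpow_nonneg (abs_nonneg _) p) hint]
        exact hE0.symm
      have hmz : μ {ω | δ < |Δ ω|} = 0 := by
        refine measure_mono_null ?_ (ae_iff.mp hae)
        intro ω hω
        simp only [Set.mem_setOf_eq, Pi.zero_apply]
        intro hc
        have : |Δ ω| = 0 := by
          rcases Real.rpow_eq_zero_iff_of_nonneg (abs_nonneg (Δ ω)) |>.mp hc with ⟨h1, _⟩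
          exact h1
        rw [hδ0] at hω
        simp only [Set.mem_setOf_eq] at hω
        linarith [abs_nonneg (Δ ω)]
      rw [hmz, hδ0]; simp
    · -- E > 0 case: Markov
      have hδpos : 0 < δ := Real.rpow_pos_of_pos hEpos _
      have hsub : {ω | δ < |Δ ω|} ⊆ {ω | δ ^ p ≤ |Δ ω| ^ p} := by
        intro ω hω
        exact Real.rpow_le_rpow hδnn (le_of_lt hω) (le_of_lt hp)
      have hmono : (μ {ω | δ < |Δ ω|}).toReal ≤ (μ {ω | δ ^ p ≤ |Δ ω| ^ p}).toReal :=
        ENNReal.toReal_mono (measure_ne_top _ _) (measure_mono hsub)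
      have hmk := mul_meas_ge_le_integral_of_nonneg
        (ae_of_all μ fun ω => Real.rpow_nonneg (abs_nonneg (Δ ω)) p) hint (δ ^ p)
      have hδp : (0:ℝ) < δ ^ p := Real.rpow_pos_of_pos hδpos _
      have hEδ : δ ^ (1 + p) = E := by
        rw [hδ, ← Real.rpow_mul hEnn, one_div_mul_cancel (by positivity : (1:ℝ) + p ≠ 0),
          Real.rpow_one]
      have key : (μ {ω | δ ^ p ≤ |Δ ω| ^ p}).toReal ≤ E / δ ^ p := by
        rw [le_div_iff₀ hδp, mul_comm]
        exact hmk
      have hdiv : E / δ ^ p = δ := by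
        rw [← hEδ, ← Real.rpow_sub hδpos]
        norm_num
      linarith
  -- set inclusions
  have hA : μ {ω | W ω + Δ ω ≤ z} ≤ μ {ω | W ω ≤ z + δ} + μ {ω | δ < |Δ ω|} := by
    refine le_trans (measure_mono ?_) (measure_union_le _ _)
    intro ω hω
    simp only [Set.mem_setOf_eq, Set.mem_union] at *
    by_cases hc : δ < |Δ ω|
    · right; exact hc
    · left
      push_neg at hc
      have := abs_le.mp hc
      linarith
  have hB : μ {ω | W ω ≤ z - δ} ≤ μ {ω | W ω + Δ ω ≤ z} + μ {ω | δ < |Δ ω|} := by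
    refine le_trans (measure_mono ?_) (measure_union_le _ _)
    intro ω hω
    simp only [Set.mem_setOf_eq, Set.mem_union] at *
    by_cases hc : δ < |Δ ω|
    · right; exact hc
    · left
      push_neg at hc
      have := abs_le.mp hc
      linarith
  -- convert to real inequalities
  have hA' : (μ {ω | W ω + Δ ω ≤ z}).toReal
      ≤ (μ {ω | W ω ≤ z + δ}).toReal + (μ {ω | δ < |Δ ω|}).toReal := by
    have := ENNReal.toReal_mono (by finiteness) hA
    rwa [ENNReal.toReal_add (measure_ne_top _ _) (measure_ne_top _ _)] at this
  have hB' : (μ {ω | W ω ≤ z - δ}).toReal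
      ≤ (μ {ω | W ω + Δ ω ≤ z}).toReal + (μ {ω | δ < |Δ ω|}).toReal := by
    have := ENNReal.toReal_mono (by finiteness) hB
    rwa [ENNReal.toReal_add (measure_ne_top _ _) (measure_ne_top _ _)] at this
  -- gaussian CDF bounds
  have hg1 : (gaussianReal 0 1 (Set.Iic (z + δ))).toReal
      ≤ (gaussianReal 0 1 (Set.Iic z)).toReal + δ := by
    have := gauss_lip (by linarith : z ≤ z + δ)
    linarith
  have hg2 : (gaussianReal 0 1 (Set.Iic z)).toReal
      ≤ (gaussianReal 0 1 (Set.Iic (z - δ))).toReal + δ := by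
    have := gauss_lip (by linarith : z - δ ≤ z)
    linarith
  have h1 := abs_le.mp (hle_S (z + δ))
  have h2 := abs_le.mp (hle_S (z - δ))
  rw [abs_le]
  constructor
  · -- lower bound
    nlinarith [h2.1, h2.2, hB', hMarkov, hg2]
  · nlinarith [h1.1, h1.2, hA', hMarkov, hg1]
end

section
/- For all real s and a with s ≤ a and a > 0, one has e^s ≤ 1 + s + s^2 (e^a − 1 − a) / a^2. -/
lemma exp_tsum (x : ℝ) : Real.exp x = ∑' n : ℕ, x ^ n / n.factorial := by
  rw [Real.exp_eq_exp_ℝ, NormedSpace.exp_eq_tsum_div]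

lemma exp_sub_tsum (x : ℝ) : Real.exp x - 1 - x = ∑' n : ℕ, x ^ (n + 2) / (n + 2).factorial := by
  have hsum := Real.summable_pow_div_factorial x
  have h1 : Summable (fun n : ℕ => x ^ (n + 1) / (n + 1).factorial) :=
    (summable_nat_add_iff 1).mpr hsum
  rw [exp_tsum, Summable.tsum_eq_zero_add hsum, Summable.tsum_eq_zero_add h1]
  simp [Nat.factorial]

set_option maxHeartbeats 2000000 in
lemma key_ineq (s a : ℝ) (h0 : 0 ≤ s) (hs : s ≤ a) :
    a ^ 2 * (Real.exp s - 1 - s) ≤ s ^ 2 * (Real.exp a - 1 - a) := by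
  rw [exp_sub_tsum, exp_sub_tsum]
  have hS : Summable (fun n : ℕ => s ^ (n + 2) / (n + 2).factorial) :=
    (summable_nat_add_iff 2).mpr (Real.summable_pow_div_factorial s)
  have hA : Summable (fun n : ℕ => a ^ (n + 2) / (n + 2).factorial) :=
    (summable_nat_add_iff 2).mpr (Real.summable_pow_div_factorial a)
  have hL : a ^ 2 * ∑' n : ℕ, s ^ (n + 2) / (n + 2).factorial
      = ∑' n : ℕ, a ^ 2 * (s ^ (n + 2) / (n + 2).factorial) := (tsum_mul_left).symm
  have hR : s ^ 2 * ∑' n : ℕ, a ^ (n + 2) / (n + 2).factorial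
      = ∑' n : ℕ, s ^ 2 * (a ^ (n + 2) / (n + 2).factorial) := (tsum_mul_left).symm
  rw [hL, hR]
  refine Summable.tsum_le_tsum (fun n => ?_) (hS.mul_left _) (hA.mul_left _)
  have hfac : (0:ℝ) < (n + 2).factorial := by positivity
  have h1 : a ^ 2 * s ^ (n + 2) ≤ s ^ 2 * a ^ (n + 2) := by
    have hp : s ^ n ≤ a ^ n := pow_le_pow_left₀ h0 hs n
    calc a ^ 2 * s ^ (n + 2) = (a ^ 2 * s ^ 2) * s ^ n := by ring
      _ ≤ (a ^ 2 * s ^ 2) * a ^ n := by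
          apply mul_le_mul_of_nonneg_left hp; positivity
      _ = s ^ 2 * a ^ (n + 2) := by ring
  calc a ^ 2 * (s ^ (n + 2) / (n + 2).factorial)
      = a ^ 2 * s ^ (n + 2) / (n + 2).factorial := by ring
    _ ≤ s ^ 2 * a ^ (n + 2) / (n + 2).factorial := by gcongr
    _ = s ^ 2 * (a ^ (n + 2) / (n + 2).factorial) := by ring

theorem exp_le_quadratic_bound (s a : ℝ) (hs : s ≤ a) (ha : 0 < a) :
    Real.exp s ≤ 1 + s + s ^ 2 * (Real.exp a - 1 - a) / a ^ 2 := by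
  have ha2 : (0:ℝ) < a ^ 2 := by positivity
  have hmain : Real.exp s - 1 - s ≤ s ^ 2 * (Real.exp a - 1 - a) / a ^ 2 := by
    rcases le_or_gt 0 s with h0 | h0
    · rw [le_div_iff₀ ha2]
      nlinarith [key_ineq s a h0 hs]
    · have h1 : Real.exp s ≤ 1 + s + s ^ 2 / 2 := by
        have hq := Real.quadratic_le_exp_of_nonneg (neg_nonneg.mpr h0.le)
        rw [Real.exp_neg] at hq
        have hpos : 0 < Real.exp s := Real.exp_pos s
        have h := mul_le_mul_of_nonneg_right hq hpos.le
        rw [inv_mul_cancel₀ hpos.ne'] at h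
        nlinarith [sq_nonneg (s ^ 2), sq_nonneg s]
      have h2 : a ^ 2 / 2 ≤ Real.exp a - 1 - a := by
        have := Real.quadratic_le_exp_of_nonneg ha.le
        linarith
      have h3 : s ^ 2 / 2 ≤ s ^ 2 * (Real.exp a - 1 - a) / a ^ 2 := by
        rw [le_div_iff₀ ha2]
        nlinarith [mul_le_mul_of_nonneg_left h2 (sq_nonneg s)]
      linarith
  linarith
end

section
/- Let ξ be a real random variable with E ξ = 0 and E ξ^2 < ∞, and define M(t) = E[ ξ·( 1{−ξ ≤ t ≤ 0} − 1{0 < t ≤ −ξ} ) ] for t ∈ ℝ. Then M(t) ≥ 0 for all t, and ∫_{−δ}^{δ} M(t) dt = E[ |ξ| · min(δ, |ξ|) ] for every δ > 0. -/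
open MeasureTheory Set

/-! For fixed `x`, the kernel `t ↦ x * (1{-x ≤ t ≤ 0} - 1{0 < t ≤ -x})` is `|x|` times the
indicator of an interval of length `|x|` with endpoint `0` (namely `[-x, 0]` or `(0, -x]`), so it
is nonnegative and its integral over `[-δ, δ]` is `|x| * min δ |x|`. Being bounded by `|x|`, it
can be integrated against the law of an integrable `ξ` in either order (Fubini). -/

noncomputable def steinKernel (x t : ℝ) : ℝ :=
  x * ((if -x ≤ t ∧ t ≤ 0 then (1 : ℝ) else 0) - (if 0 < t ∧ t ≤ -x then (1 : ℝ) else 0))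

lemma steinKernel_of_nonneg {x : ℝ} (hx : 0 ≤ x) :
    steinKernel x = (Icc (-x) 0).indicator fun _ => x := by
  ext t
  have : ¬(0 < t ∧ t ≤ -x) := fun h => by linarith [h.1, h.2]
  simp only [steinKernel, if_neg this, indicator, mem_Icc]
  split_ifs <;> ring

lemma steinKernel_of_neg {x : ℝ} (hx : x < 0) :
    steinKernel x = (Ioc 0 (-x)).indicator fun _ => -x := by
  ext t
  have : ¬(-x ≤ t ∧ t ≤ 0) := fun h => by linarith [h.1, h.2]
  simp only [steinKernel, if_neg this, indicator, mem_Ioc]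
  split_ifs <;> ring

lemma steinKernel_nonneg (x t : ℝ) : 0 ≤ steinKernel x t := by
  rcases le_or_gt 0 x with hx | hx
  · rw [steinKernel_of_nonneg hx]
    exact indicator_nonneg (fun _ _ => hx) t
  · rw [steinKernel_of_neg hx]
    exact indicator_nonneg (fun _ _ => by linarith) t

lemma abs_steinKernel_le (x t : ℝ) : |steinKernel x t| ≤ |x| := by
  rcases le_or_gt 0 x with hx | hx
  · rw [steinKernel_of_nonneg hx]
    exact norm_indicator_le_norm_self (fun _ : ℝ => x) t
  · rw [steinKernel_of_neg hx, ← abs_neg x]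
    exact norm_indicator_le_norm_self (fun _ : ℝ => -x) t

lemma measurable_steinKernel : Measurable (Function.uncurry steinKernel) := by
  unfold steinKernel Function.uncurry
  refine measurable_fst.mul (.sub (.ite ?_ measurable_const measurable_const)
    (.ite ?_ measurable_const measurable_const))
  · exact (measurableSet_le measurable_fst.neg measurable_snd).inter
      (measurableSet_le measurable_snd measurable_const)
  · exact (measurableSet_lt measurable_const measurable_snd).inter
      (measurableSet_le measurable_snd measurable_fst.neg)

lemma intervalIntegral_steinKernel {δ : ℝ} (hδ : 0 ≤ δ) (x : ℝ) :
    ∫ t in (-δ)..δ, steinKernel x t = |x| * min δ |x| := by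
  rw [intervalIntegral.integral_of_le (by linarith)]
  rcases le_or_gt 0 x with hx | hx
  · have hae : (Ioc (-δ) δ ∩ Icc (-x) 0 : Set ℝ) =ᵐ[volume]
        (Ioc (-δ) δ ∩ Ioc (-x) 0 : Set ℝ) :=
      (ae_eq_refl (Ioc (-δ) δ)).inter Ioc_ae_eq_Icc.symm
    rw [steinKernel_of_nonneg hx, setIntegral_indicator measurableSet_Icc, setIntegral_const,
      measureReal_congr hae, Ioc_inter_Ioc, max_neg_neg, min_eq_right hδ,
      Real.volume_real_Ioc_of_le (by simp [hδ, hx]), abs_of_nonneg hx, smul_eq_mul]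
    ring
  · rw [steinKernel_of_neg hx, setIntegral_indicator measurableSet_Ioc, setIntegral_const,
      Ioc_inter_Ioc, max_eq_right (neg_nonpos.2 hδ),
      Real.volume_real_Ioc_of_le (le_min hδ (by linarith)), abs_of_neg hx, smul_eq_mul]
    ring

lemma intervalIntegral_integral_swap_of_abs_le {Ω : Type*} [MeasurableSpace Ω] {μ : Measure Ω}
    [SFinite μ] {K : ℝ → ℝ → ℝ} (hK : Measurable (Function.uncurry K))
    (hK_le : ∀ x t, |K x t| ≤ |x|)
    {ξ : Ω → ℝ} (hξ : Integrable ξ μ) (a b : ℝ) :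
    ∫ t in a..b, (∫ ω, K (ξ ω) t ∂μ) = ∫ ω, (∫ t in a..b, K (ξ ω) t) ∂μ := by
  have : IsFiniteMeasure (volume.restrict (uIoc a b)) :=
    isFiniteMeasure_restrict.2 measure_Ioc_lt_top.ne
  apply intervalIntegral_integral_swap
  refine (hξ.abs.comp_snd _).mono' ?_ (.of_forall fun p => hK_le _ _)
  exact (hK.comp_aemeasurable
    (hξ.aemeasurable.comp_snd.prodMk measurable_fst.aemeasurable)).aestronglyMeasurable

theorem stein_kernel_M_general {Ω : Type*} [MeasurableSpace Ω] (μ : Measure Ω)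
    [IsProbabilityMeasure μ] (ξ : Ω → ℝ)
    (hint : Integrable ξ μ)
    (M : ℝ → ℝ)
    (hM : ∀ t : ℝ, M t = ∫ ω, ξ ω *
        ((if -ξ ω ≤ t ∧ t ≤ 0 then (1 : ℝ) else 0) -
          (if 0 < t ∧ t ≤ -ξ ω then (1 : ℝ) else 0)) ∂μ) :
    (∀ t : ℝ, 0 ≤ M t) ∧
      ∀ δ : ℝ, 0 < δ → ∫ t in (-δ)..δ, M t = ∫ ω, |ξ ω| * min δ |ξ ω| ∂μ := by
  obtain rfl : M = fun t => ∫ ω, steinKernel (ξ ω) t ∂μ := funext hM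
  refine ⟨fun t => integral_nonneg fun ω => steinKernel_nonneg _ _, fun δ hδ => ?_⟩
  rw [intervalIntegral_integral_swap_of_abs_le measurable_steinKernel abs_steinKernel_le hint]
  exact integral_congr_ae (.of_forall fun ω => intervalIntegral_steinKernel hδ.le _)

theorem stein_kernel_M {Ω : Type*} [MeasurableSpace Ω] (μ : Measure Ω)
    [IsProbabilityMeasure μ] (ξ : Ω → ℝ) (hmeas : Measurable ξ)
    (hint : Integrable ξ μ) (hint2 : Integrable (fun ω => ξ ω ^ 2) μ)
    (hmean : ∫ ω, ξ ω ∂μ = 0)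
    (M : ℝ → ℝ)
    (hM : ∀ t : ℝ, M t = ∫ ω, ξ ω *
        ((if -ξ ω ≤ t ∧ t ≤ 0 then (1 : ℝ) else 0) -
          (if 0 < t ∧ t ≤ -ξ ω then (1 : ℝ) else 0)) ∂μ) :
    (∀ t : ℝ, 0 ≤ M t) ∧
      ∀ δ : ℝ, 0 < δ → ∫ t in (-δ)..δ, M t = ∫ ω, |ξ ω| * min δ |ξ ω| ∂μ :=
  stein_kernel_M_general μ ξ hint M hM
end

section
/- Let X_1,…,X_n be independent real random variables with E g_i(X_i) = 0, Σ_{i=1}^n E g_i(X_i)^2 = 1, and suppose Σ_{i=1}^n E|g_i(X_i)|^p ≤ 1/2 for some p > 2. Then δ := ( (2(p−2)^{p−2}/(p−1)^{p−1}) Σ_{i=1}^n E|g_i(X_i)|^p )^{1/(p−2)} satisfies Σ_{i=1}^n E[ |g_i(X_i)| · min(δ, |g_i(X_i)|) ] ≥ 1/2. -/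
/-!
For `a ≥ 0` and `b > 0` one has `min a b ≥ a - K a^(p-1) / b^(p-2)` with
`K = (p-2)^(p-2) / (p-1)^(p-1)`: when `b < a` this is `(a - b) b^(p-2) ≤ K a^(p-1)`, the maximum
of the left side over `b ∈ [0, a]` (weighted AM-GM). Multiplying by `a = |g_i(X_i)|` and integrating
gives `∑ E[|g_i| min(δ, |g_i|)] ≥ 1 - K δ^(2-p) ∑ E|g_i|^p`, and the chosen `δ` makes the
subtracted term exactly `1/2`.
-/

open MeasureTheory ProbabilityTheory

theorem sub_mul_rpow_le {q a b : ℝ} (hq : 0 < q) (hb : 0 ≤ b) (hba : b ≤ a) :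
    (a - b) * b ^ q ≤ q ^ q / (q + 1) ^ (q + 1) * a ^ (q + 1) := by
  have hq1 : 0 < q + 1 := by linarith
  have hab : 0 ≤ a - b := by linarith
  have hbq : 0 ≤ b / q := by positivity
  have amgm : (a - b) ^ (1 / (q + 1)) * (b / q) ^ (q / (q + 1)) ≤ a / (q + 1) := by
    convert Real.geom_mean_le_arith_mean2_weighted (w₁ := 1 / (q + 1)) (w₂ := q / (q + 1))
      (by positivity) (by positivity) hab hbq (by field_simp; ring) using 1
    field_simp
    ring
  have hpow := Real.rpow_le_rpow (by positivity) amgm hq1.le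
  rw [Real.mul_rpow (by positivity) (by positivity), ← Real.rpow_mul hab, ← Real.rpow_mul hbq,
    one_div_mul_cancel hq1.ne', div_mul_cancel₀ _ hq1.ne', Real.rpow_one,
    Real.div_rpow hb hq.le, Real.div_rpow (hab.trans (by linarith)) hq1.le] at hpow
  have hqq : 0 < q ^ q := Real.rpow_pos_of_pos hq q
  calc (a - b) * b ^ q = (a - b) * (b ^ q / q ^ q) * q ^ q := by field_simp
    _ ≤ a ^ (q + 1) / (q + 1) ^ (q + 1) * q ^ q := by gcongr
    _ = q ^ q / (q + 1) ^ (q + 1) * a ^ (q + 1) := by ring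

theorem sub_rpow_le_min {p a b : ℝ} (hp : 2 < p) (ha : 0 ≤ a) (hb : 0 < b) :
    a - (p - 2) ^ (p - 2) / (p - 1) ^ (p - 1) * a ^ (p - 1) / b ^ (p - 2) ≤ min a b := by
  have hp2 : 0 < p - 2 := by linarith
  have hp1 : 0 < p - 1 := by linarith
  have hbp : 0 < b ^ (p - 2) := Real.rpow_pos_of_pos hb _
  rcases le_total a b with hab | hba
  · rw [min_eq_left hab, sub_le_self_iff]
    positivity
  · rw [min_eq_right hba, sub_le_comm, le_div_iff₀ hbp]
    have := sub_mul_rpow_le hp2 hb.le hba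
    rwa [show p - 2 + 1 = p - 1 by ring] at this

section

variable {Ω : Type*} [MeasurableSpace Ω] {μ : Measure Ω} {f : Ω → ℝ} {p : ℝ}

theorem integral_sq_sub_le_integral_abs_mul_min [IsFiniteMeasure μ] {δ : ℝ} (hp : 2 < p)
    (hδ : 0 < δ) (hf : AEStronglyMeasurable f μ) (hfp : Integrable (fun ω => |f ω| ^ p) μ) :
    ∫ ω, f ω ^ 2 ∂μ - (p - 2) ^ (p - 2) / (p - 1) ^ (p - 1) / δ ^ (p - 2) * ∫ ω, |f ω| ^ p ∂μ
      ≤ ∫ ω, |f ω| * min δ |f ω| ∂μ := by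
  have hsq : Integrable (fun ω => f ω ^ 2) μ := by
    simpa [Real.rpow_two] using integrable_norm_rpow_of_le hf zero_le_two (by linarith) hp.le
      (by simpa using hfp)
  have hmin : Integrable (fun ω => |f ω| * min δ |f ω|) μ := by
    have hcont : Continuous fun x : ℝ => |x| * min δ |x| := by fun_prop
    refine hsq.mono (hcont.comp_aestronglyMeasurable hf) (ae_of_all _ fun ω => ?_)
    rw [Real.norm_of_nonneg (mul_nonneg (abs_nonneg _) (le_min hδ.le (abs_nonneg _))),
      Real.norm_of_nonneg (sq_nonneg _), ← sq_abs, sq]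
    exact mul_le_mul_of_nonneg_left (min_le_right _ _) (abs_nonneg _)
  rw [← integral_const_mul, ← integral_sub hsq (hfp.const_mul _)]
  refine integral_mono (hsq.sub (hfp.const_mul _)) hmin fun ω => ?_
  have ha := abs_nonneg (f ω)
  have hpow : |f ω| ^ p = |f ω| * |f ω| ^ (p - 1) := by
    rw [← Real.rpow_one_add' ha (by linarith), add_sub_cancel]
  calc f ω ^ 2 - (p - 2) ^ (p - 2) / (p - 1) ^ (p - 1) / δ ^ (p - 2) * |f ω| ^ p
      = |f ω| *
          (|f ω| - (p - 2) ^ (p - 2) / (p - 1) ^ (p - 1) * |f ω| ^ (p - 1) / δ ^ (p - 2)) := by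
        rw [hpow, ← sq_abs]
        ring
    _ ≤ |f ω| * min |f ω| δ := mul_le_mul_of_nonneg_left (sub_rpow_le_min hp ha hδ) ha
    _ = |f ω| * min δ |f ω| := by rw [min_comm]

theorem integral_sq_eq_zero_of_integral_abs_rpow_eq_zero (hp : p ≠ 0)
    (hfp : Integrable (fun ω => |f ω| ^ p) μ) (h : ∫ ω, |f ω| ^ p ∂μ = 0) :
    ∫ ω, f ω ^ 2 ∂μ = 0 := by
  have hzero := (integral_eq_zero_iff_of_nonneg
    (fun ω => Real.rpow_nonneg (abs_nonneg (f ω)) p) hfp).mp h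
  rw [integral_congr_ae (g := fun _ => 0) ?_, integral_zero]
  filter_upwards [hzero] with ω hω
  simp_all [Real.rpow_eq_zero (abs_nonneg _) hp]

theorem sum_integral_abs_rpow_pos {ι : Type*} [Fintype ι] {f : ι → Ω → ℝ} (hp : p ≠ 0)
    (hfp : ∀ i, Integrable (fun ω => |f i ω| ^ p) μ) (h : ∑ i, ∫ ω, f i ω ^ 2 ∂μ ≠ 0) :
    0 < ∑ i, ∫ ω, |f i ω| ^ p ∂μ := by
  have hnonneg : ∀ i ∈ Finset.univ, 0 ≤ ∫ ω, |f i ω| ^ p ∂μ := fun i _ =>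
    integral_nonneg fun ω => Real.rpow_nonneg (abs_nonneg _) p
  refine (Finset.sum_nonneg hnonneg).lt_of_ne fun hsum => h ?_
  refine Finset.sum_eq_zero fun i hi => ?_
  exact integral_sq_eq_zero_of_integral_abs_rpow_eq_zero hp (hfp i)
    ((Finset.sum_eq_zero_iff_of_nonneg hnonneg).mp hsum.symm i hi)

end

theorem delta_choice_satisfies_condition_general {Ω : Type*} [MeasurableSpace Ω] (μ : Measure Ω)
    [IsProbabilityMeasure μ] (n : ℕ) (X : Fin n → Ω → ℝ) (g : Fin n → ℝ → ℝ)
    (hint : ∀ i, Integrable (fun ω => g i (X i ω)) μ)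
    (hvar : ∑ i, ∫ ω, (g i (X i ω)) ^ 2 ∂μ = 1)
    (p : ℝ) (hp : 2 < p)
    (hintp : ∀ i, Integrable (fun ω => |g i (X i ω)| ^ p) μ) :
    ∑ i, ∫ ω, |g i (X i ω)| *
        min ((2 * (p - 2) ^ (p - 2) / (p - 1) ^ (p - 1) *
          ∑ j, ∫ ω', |g j (X j ω')| ^ p ∂μ) ^ (1 / (p - 2))) |g i (X i ω)| ∂μ ≥ 1 / 2 := by
  set K := (p - 2) ^ (p - 2) / (p - 1) ^ (p - 1)
  set S := ∑ j, ∫ ω', |g j (X j ω')| ^ p ∂μ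
  have hK : 0 < K := by
    have : 0 < p - 2 := by linarith
    have : 0 < p - 1 := by linarith
    positivity
  have hS : 0 < S := sum_integral_abs_rpow_pos (by linarith) hintp (by simp [hvar])
  set δ := (2 * (p - 2) ^ (p - 2) / (p - 1) ^ (p - 1) * S) ^ (1 / (p - 2))
  have h2KS : 2 * (p - 2) ^ (p - 2) / (p - 1) ^ (p - 1) * S = 2 * K * S := by ring
  have hδ : 0 < δ := Real.rpow_pos_of_pos (by rw [h2KS]; positivity) _
  have hδpow : δ ^ (p - 2) = 2 * K * S := by
    simp only [δ, h2KS, one_div]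
    exact Real.rpow_inv_rpow (by positivity) (by linarith)
  rw [ge_iff_le]
  calc 1 / 2 = ∑ i, ∫ ω, g i (X i ω) ^ 2 ∂μ - K / δ ^ (p - 2) * S := by
        rw [hvar, hδpow]
        field_simp
        ring
    _ = ∑ i, (∫ ω, g i (X i ω) ^ 2 ∂μ - K / δ ^ (p - 2) * ∫ ω, |g i (X i ω)| ^ p ∂μ) := by
        rw [Finset.sum_sub_distrib, Finset.mul_sum]
    _ ≤ _ := Finset.sum_le_sum fun i _ => integral_sq_sub_le_integral_abs_mul_min hp hδ
        (hint i).aestronglyMeasurable (hintp i)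

theorem delta_choice_satisfies_condition {Ω : Type*} [MeasurableSpace Ω] (μ : Measure Ω)
    [IsProbabilityMeasure μ] (n : ℕ) (X : Fin n → Ω → ℝ) (g : Fin n → ℝ → ℝ)
    (hmeasX : ∀ i, Measurable (X i)) (hmeasg : ∀ i, Measurable (g i))
    (hindep : iIndepFun X μ)
    (hint : ∀ i, Integrable (fun ω => g i (X i ω)) μ)
    (hmean : ∀ i, ∫ ω, g i (X i ω) ∂μ = 0)
    (hvar : ∑ i, ∫ ω, (g i (X i ω)) ^ 2 ∂μ = 1)
    (p : ℝ) (hp : 2 < p)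
    (hintp : ∀ i, Integrable (fun ω => |g i (X i ω)| ^ p) μ)
    (hmom : ∑ i, ∫ ω, |g i (X i ω)| ^ p ∂μ ≤ 1 / 2) :
    ∑ i, ∫ ω, |g i (X i ω)| *
        min ((2 * (p - 2) ^ (p - 2) / (p - 1) ^ (p - 1) *
          ∑ j, ∫ ω', |g j (X j ω')| ^ p ∂μ) ^ (1 / (p - 2))) |g i (X i ω)| ∂μ ≥ 1 / 2 :=
  delta_choice_satisfies_condition_general μ n X g hint hvar p hp hintp
end

section
/- Let ξ_1,…,ξ_n be independent real random variables with E ξ_i = 0 and Σ_{i=1}^n E ξ_i^2 = 1. Set ξ̄_i = ξ_i·1{ξ_i ≤ 1} and W̄ = Σ_{i=1}^n ξ̄_i. Then E exp(W̄) ≤ exp(e − 2) and E[ W^2 exp(W̄) ] ≤ 2.06·e + 2.06·(e−1)^2 < 3.42^2, where W = Σ_{i=1}^n ξ_i. -/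
/-!
Write `Y k = exp ξ̄ₖ`. Since `eˢ ≤ 1 + s + (e - 2) s²` for `s ≤ 1` and `E ξ̄ₖ ≤ E ξₖ = 0`, each
factor has `E Y k ≤ 1 + (e - 2) E ξₖ² ≤ exp ((e - 2) E ξₖ²)`, and independence makes `E exp W̄`
the product of these. For the second bound expand `W² exp W̄ = ∑ᵢ ∑ⱼ ξᵢ ξⱼ ∏ₖ Y k` and factor
each term by independence: a diagonal term contributes `E[ξᵢ² Y i] ≤ e E ξᵢ²`, an off-diagonal
one `E[ξᵢ Y i] E[ξⱼ Y j]` with `|E[ξᵢ Y i]| = |E[ξᵢ (Y i - 1)]| ≤ (e - 1) E ξᵢ²`, and the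
remaining product of the `E Y k` is at most `exp (e - 2) ≤ 2.06`.
-/

open MeasureTheory ProbabilityTheory Finset Real

namespace Real

theorem hasSum_pow_div_factorial_add_two (x : ℝ) :
    HasSum (fun n : ℕ => x ^ (n + 2) / (n + 2).factorial) (exp x - 1 - x) := by
  have h := (hasSum_nat_add_iff' 2).2 (exp_eq_exp_ℝ ▸ NormedSpace.expSeries_div_hasSum_exp x)
  simpa [sum_range_succ, sub_sub] using h

theorem exp_le_one_add_add_sq_div_two_of_nonpos {x : ℝ} (hx : x ≤ 0) :
    exp x ≤ 1 + x + x ^ 2 / 2 := by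
  have hq := quadratic_le_exp_of_nonneg (neg_nonneg.2 hx)
  -- `(1 + x + x²/2) (1 - x + x²/2) = 1 + x⁴/4 ≥ 1 = exp x * exp (-x)`
  have hprod : exp x * exp (-x) = 1 := by rw [← exp_add, add_neg_cancel, exp_zero]
  nlinarith [exp_pos x, sq_nonneg x, sq_nonneg (x ^ 2)]

theorem exp_le_one_add_add_mul_sq {x : ℝ} (hx : x ≤ 1) :
    exp x ≤ 1 + x + (exp 1 - 2) * x ^ 2 := by
  have he : 1 / 2 ≤ exp 1 - 2 := by linarith [exp_one_gt_d9]
  rcases le_total x 0 with hx0 | hx0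
  · nlinarith [exp_le_one_add_add_sq_div_two_of_nonpos hx0, sq_nonneg x]
  · -- termwise, `x ^ (n + 2) / (n + 2)! ≤ x ^ 2 / (n + 2)!`, and the latter sum to `(e - 2) x²`
    have h1 := (hasSum_pow_div_factorial_add_two 1).mul_left (x ^ 2)
    have hle := hasSum_le (fun n => ?_) (hasSum_pow_div_factorial_add_two x) h1
    · simp only [sub_sub] at hle
      linarith
    · rw [one_pow, ← mul_div_assoc, mul_one, pow_add]
      gcongr
      exact mul_le_of_le_one_left (sq_nonneg x) (pow_le_one₀ hx0 hx)

theorem abs_exp_sub_one_le_mul_abs {x : ℝ} (hx : x ≤ 1) :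
    |exp x - 1| ≤ (exp 1 - 1) * |x| := by
  rcases le_total 0 x with hx0 | hx0
  · have hsq : (exp 1 - 2) * x ^ 2 ≤ (exp 1 - 2) * x :=
      mul_le_mul_of_nonneg_left (by nlinarith) (by linarith [exp_one_gt_d9])
    rw [abs_of_nonneg (by linarith [add_one_le_exp x]), abs_of_nonneg hx0]
    linarith [exp_le_one_add_add_mul_sq hx]
  · rw [abs_of_nonpos (by linarith [exp_le_one_iff.2 hx0]), abs_of_nonpos hx0]
    nlinarith [add_one_le_exp x, exp_one_gt_d9]

theorem exp_exp_one_sub_two_le : exp (exp 1 - 2) ≤ 2.06 := by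
  have h := exp_bound' (x := 0.7183) (by norm_num) (by norm_num) (n := 5) (by norm_num)
  norm_num [sum_range_succ, Nat.factorial] at h
  calc exp (exp 1 - 2) ≤ exp 0.7183 := exp_le_exp.2 (by linarith [exp_one_lt_d9])
    _ ≤ 2.06 := by linarith

end Real

noncomputable def truncLeOne (x : ℝ) : ℝ := if x ≤ 1 then x else 0

theorem truncLeOne_le_one (x : ℝ) : truncLeOne x ≤ 1 := by
  unfold truncLeOne; split_ifs <;> linarith

theorem truncLeOne_le_self (x : ℝ) : truncLeOne x ≤ x := by
  unfold truncLeOne; split_ifs <;> linarith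

theorem abs_truncLeOne_le (x : ℝ) : |truncLeOne x| ≤ |x| := by
  unfold truncLeOne; split_ifs <;> simp

@[fun_prop]
theorem measurable_truncLeOne : Measurable truncLeOne :=
  Measurable.ite measurableSet_Iic measurable_id measurable_const

theorem exp_truncLeOne_le (x : ℝ) : exp (truncLeOne x) ≤ exp 1 :=
  exp_le_exp.2 (truncLeOne_le_one x)

section OneVariable

variable {Ω : Type*} [MeasurableSpace Ω] {μ : Measure Ω} {X : Ω → ℝ}

theorem aestronglyMeasurable_exp_truncLeOne (hX : AEMeasurable X μ) :
    AEStronglyMeasurable (fun ω => exp (truncLeOne (X ω))) μ :=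
  (measurable_exp.comp measurable_truncLeOne).comp_aemeasurable hX |>.aestronglyMeasurable

theorem norm_exp_truncLeOne_le (x : ℝ) : ‖exp (truncLeOne x)‖ ≤ exp 1 := by
  rw [norm_of_nonneg (exp_pos _).le]; exact exp_truncLeOne_le x

theorem integral_exp_truncLeOne_le [IsProbabilityMeasure μ] (hX : Integrable X μ)
    (hX2 : Integrable (fun ω => X ω ^ 2) μ) (hmean : ∫ ω, X ω ∂μ ≤ 0) :
    ∫ ω, exp (truncLeOne (X ω)) ∂μ ≤ exp ((exp 1 - 2) * ∫ ω, X ω ^ 2 ∂μ) := by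
  have hTm : AEStronglyMeasurable (fun ω => truncLeOne (X ω)) μ :=
    (measurable_truncLeOne.comp_aemeasurable hX.aemeasurable).aestronglyMeasurable
  have hT : Integrable (fun ω => truncLeOne (X ω)) μ :=
    hX.mono hTm (ae_of_all _ fun ω => abs_truncLeOne_le (X ω))
  have hT2 : Integrable (fun ω => truncLeOne (X ω) ^ 2) μ :=
    hX2.mono (hTm.pow 2) (ae_of_all _ fun ω => by
      simpa only [norm_pow, Real.norm_eq_abs] using
        pow_le_pow_left₀ (abs_nonneg _) (abs_truncLeOne_le (X ω)) 2)
  have he : 0 ≤ exp 1 - 2 := by linarith [exp_one_gt_d9]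
  calc ∫ ω, exp (truncLeOne (X ω)) ∂μ
      ≤ ∫ ω, 1 + truncLeOne (X ω) + (exp 1 - 2) * truncLeOne (X ω) ^ 2 ∂μ :=
        integral_mono (.of_bound (aestronglyMeasurable_exp_truncLeOne hX.aemeasurable) _
            (ae_of_all _ fun ω => norm_exp_truncLeOne_le _))
          (((integrable_const 1).add hT).add (hT2.const_mul _))
          fun ω => exp_le_one_add_add_mul_sq (truncLeOne_le_one _)
    _ = 1 + ∫ ω, truncLeOne (X ω) ∂μ + (exp 1 - 2) * ∫ ω, truncLeOne (X ω) ^ 2 ∂μ := by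
        have h1T : Integrable (fun ω => 1 + truncLeOne (X ω)) μ := (integrable_const 1).add hT
        rw [integral_add h1T (hT2.const_mul _), integral_add (integrable_const 1) hT,
          integral_const_mul]
        simp
    _ ≤ 1 + (exp 1 - 2) * ∫ ω, X ω ^ 2 ∂μ := by
        have h1 := integral_mono hT hX fun ω => truncLeOne_le_self (X ω)
        have h2 := integral_mono hT2 hX2 fun ω => sq_le_sq.2 (abs_truncLeOne_le (X ω))
        nlinarith
    _ ≤ exp ((exp 1 - 2) * ∫ ω, X ω ^ 2 ∂μ) := by
        linarith [add_one_le_exp ((exp 1 - 2) * ∫ ω, X ω ^ 2 ∂μ)]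

theorem MeasureTheory.Integrable.mul_exp_truncLeOne {f : Ω → ℝ} (hf : Integrable f μ)
    (hX : AEMeasurable X μ) : Integrable (fun ω => f ω * exp (truncLeOne (X ω))) μ :=
  hf.mul_bdd (aestronglyMeasurable_exp_truncLeOne hX)
    (ae_of_all _ fun _ => norm_exp_truncLeOne_le _)

theorem abs_integral_mul_exp_truncLeOne_le (hX : Integrable X μ)
    (hX2 : Integrable (fun ω => X ω ^ 2) μ) (hmean : ∫ ω, X ω ∂μ = 0) :
    |∫ ω, X ω * exp (truncLeOne (X ω)) ∂μ| ≤ (exp 1 - 1) * ∫ ω, X ω ^ 2 ∂μ := by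
  have hcenter : ∫ ω, X ω * exp (truncLeOne (X ω)) ∂μ
      = ∫ ω, X ω * (exp (truncLeOne (X ω)) - 1) ∂μ := by
    rw [← sub_zero (∫ ω, X ω * exp (truncLeOne (X ω)) ∂μ), ← hmean,
      ← integral_sub (hX.mul_exp_truncLeOne hX.aemeasurable) hX]
    simp only [mul_sub, mul_one]
  rw [hcenter, ← integral_const_mul, ← norm_eq_abs]
  refine norm_integral_le_of_norm_le (hX2.const_mul _) (ae_of_all _ fun ω => ?_)
  have he : 0 ≤ exp 1 - 1 := by linarith [exp_one_gt_d9]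
  calc ‖X ω * (exp (truncLeOne (X ω)) - 1)‖
      = |X ω| * |exp (truncLeOne (X ω)) - 1| := by rw [norm_mul, norm_eq_abs, norm_eq_abs]
    _ ≤ |X ω| * ((exp 1 - 1) * |truncLeOne (X ω)|) := by
        gcongr; exact abs_exp_sub_one_le_mul_abs (truncLeOne_le_one _)
    _ ≤ |X ω| * ((exp 1 - 1) * |X ω|) := by gcongr ?_ * (_ * ?_); exact abs_truncLeOne_le _
    _ = (exp 1 - 1) * X ω ^ 2 := by rw [← sq_abs (X ω)]; ring

theorem integral_sq_mul_exp_truncLeOne_le (hX : AEMeasurable X μ)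
    (hX2 : Integrable (fun ω => X ω ^ 2) μ) :
    ∫ ω, X ω ^ 2 * exp (truncLeOne (X ω)) ∂μ ≤ exp 1 * ∫ ω, X ω ^ 2 ∂μ := by
  rw [← integral_const_mul]
  refine integral_mono (hX2.mul_exp_truncLeOne hX) (hX2.const_mul _) fun ω => ?_
  rw [mul_comm (exp 1)]
  exact mul_le_mul_of_nonneg_left (exp_truncLeOne_le _) (sq_nonneg _)

end OneVariable

theorem Finset.prod_apply_update {ι α M : Type*} [DecidableEq ι] [CommMonoid M] {s : Finset ι}
    {i : ι} (hi : i ∈ s) (Φ : ι → α → M) (g : ι → α) (a : α) :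
    ∏ k ∈ s, Φ k (Function.update g i a k) = Φ i a * ∏ k ∈ s.erase i, Φ k (g k) := by
  rw [← mul_prod_erase s _ hi, Function.update_self]
  congr 1
  exact prod_congr rfl fun k hk => by rw [Function.update_of_ne (ne_of_mem_erase hk)]

section Independence

variable {Ω ι β : Type*} [MeasurableSpace Ω] [MeasurableSpace β] {μ : Measure Ω} [Fintype ι]
  [DecidableEq ι] {ξ : ι → Ω → β}

theorem ProbabilityTheory.iIndepFun.integral_comp_mul_prod_erase (hξ : iIndepFun ξ μ)
    (hm : ∀ k, AEMeasurable (ξ k) μ) {f : β → ℝ} {g : ι → β → ℝ} (hf : Measurable f)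
    (hg : ∀ k, Measurable (g k)) (i : ι) :
    ∫ ω, f (ξ i ω) * ∏ k ∈ univ.erase i, g k (ξ k ω) ∂μ
      = (∫ ω, f (ξ i ω) ∂μ) * ∏ k ∈ univ.erase i, ∫ ω, g k (ξ k ω) ∂μ := by
  have hF : ∀ k, Measurable (Function.update g i f k) := fun k => by
    rcases eq_or_ne k i with rfl | hk
    · simpa using hf
    · simpa [hk] using hg k
  have h := hξ.integral_fun_prod_comp hm fun k => (hF k).aestronglyMeasurable
  have hL : ∀ ω, ∏ k, Function.update g i f k (ξ k ω)
      = f (ξ i ω) * ∏ k ∈ univ.erase i, g k (ξ k ω) := fun ω =>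
    prod_apply_update (mem_univ i) (fun k h => h (ξ k ω)) g f
  rwa [prod_apply_update (mem_univ i) (fun k h => ∫ ω, h (ξ k ω) ∂μ) g f,
    integral_congr_ae (ae_of_all _ hL)] at h

theorem ProbabilityTheory.iIndepFun.integral_comp_mul_comp_mul_prod_erase (hξ : iIndepFun ξ μ)
    (hm : ∀ k, AEMeasurable (ξ k) μ) {f f' : β → ℝ} {g : ι → β → ℝ} (hf : Measurable f)
    (hf' : Measurable f') (hg : ∀ k, Measurable (g k)) {i j : ι} (hij : i ≠ j) :
    ∫ ω, f (ξ i ω) * (f' (ξ j ω) * ∏ k ∈ (univ.erase i).erase j, g k (ξ k ω)) ∂μ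
      = (∫ ω, f (ξ i ω) ∂μ) * ((∫ ω, f' (ξ j ω) ∂μ) *
          ∏ k ∈ (univ.erase i).erase j, ∫ ω, g k (ξ k ω) ∂μ) := by
  have hj : j ∈ univ.erase i := mem_erase.2 ⟨hij.symm, mem_univ j⟩
  have hg' : ∀ k, Measurable (Function.update g j f' k) := fun k => by
    rcases eq_or_ne k j with rfl | hk
    · simpa using hf'
    · simpa [hk] using hg k
  have h := hξ.integral_comp_mul_prod_erase hm hf hg' i
  rwa [prod_apply_update hj (fun k h => ∫ ω, h (ξ k ω) ∂μ) g f',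
    integral_congr_ae (ae_of_all _ fun ω =>
      congrArg (f (ξ i ω) * ·) (prod_apply_update hj (fun k h => h (ξ k ω)) g f'))] at h

end Independence

section Family

variable {Ω ι : Type*} [MeasurableSpace Ω] {μ : Measure Ω} [Fintype ι] {ξ : ι → Ω → ℝ}

theorem integrable_mul_mul_exp_sum_truncLeOne (hint : ∀ i, Integrable (ξ i) μ)
    (hint2 : ∀ i, Integrable (fun ω => ξ i ω ^ 2) μ) (i j : ι) :
    Integrable (fun ω => ξ i ω * ξ j ω * exp (∑ k, truncLeOne (ξ k ω))) μ := by
  have hL2 : ∀ k, MemLp (ξ k) 2 μ := fun k =>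
    (memLp_two_iff_integrable_sq (hint k).aestronglyMeasurable).2 (hint2 k)
  refine ((hL2 i).integrable_mul (hL2 j)).mul_bdd (c := exp (Fintype.card ι))
    (measurable_exp.comp_aemeasurable (Finset.aemeasurable_fun_sum _ fun k _ =>
      measurable_truncLeOne.comp_aemeasurable (hint k).aemeasurable)).aestronglyMeasurable
    (ae_of_all _ fun ω => ?_)
  rw [norm_of_nonneg (exp_pos _).le, exp_le_exp, ← nsmul_one, ← card_univ, ← sum_const]
  exact sum_le_sum fun k _ => truncLeOne_le_one _

variable [IsProbabilityMeasure μ]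

theorem prod_integral_exp_truncLeOne_le (hint : ∀ i, Integrable (ξ i) μ)
    (hint2 : ∀ i, Integrable (fun ω => ξ i ω ^ 2) μ) (hmean : ∀ i, ∫ ω, ξ i ω ∂μ ≤ 0)
    (s : Finset ι) :
    ∏ k ∈ s, ∫ ω, exp (truncLeOne (ξ k ω)) ∂μ
      ≤ exp ((exp 1 - 2) * ∑ k, ∫ ω, ξ k ω ^ 2 ∂μ) := by
  have he : 0 ≤ exp 1 - 2 := by linarith [exp_one_gt_d9]
  calc ∏ k ∈ s, ∫ ω, exp (truncLeOne (ξ k ω)) ∂μ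
      ≤ ∏ k ∈ s, exp ((exp 1 - 2) * ∫ ω, ξ k ω ^ 2 ∂μ) := by
        gcongr with k
        exact integral_exp_truncLeOne_le (hint k) (hint2 k) (hmean k)
    _ = exp ((exp 1 - 2) * ∑ k ∈ s, ∫ ω, ξ k ω ^ 2 ∂μ) := by rw [← exp_sum, mul_sum]
    _ ≤ exp ((exp 1 - 2) * ∑ k, ∫ ω, ξ k ω ^ 2 ∂μ) := by
        gcongr
        exact subset_univ s

theorem integral_exp_sum_truncLeOne_le (hξ : iIndepFun ξ μ) (hint : ∀ i, Integrable (ξ i) μ)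
    (hint2 : ∀ i, Integrable (fun ω => ξ i ω ^ 2) μ) (hmean : ∀ i, ∫ ω, ξ i ω ∂μ ≤ 0) :
    ∫ ω, exp (∑ k, truncLeOne (ξ k ω)) ∂μ ≤ exp ((exp 1 - 2) * ∑ k, ∫ ω, ξ k ω ^ 2 ∂μ) := by
  simp_rw [exp_sum]
  rw [hξ.integral_fun_prod_comp (f := fun _ x => exp (truncLeOne x))
    (fun k => (hint k).aemeasurable) fun _ => (by fun_prop : Measurable _).aestronglyMeasurable]
  exact prod_integral_exp_truncLeOne_le hint hint2 hmean univ

theorem integral_sq_mul_exp_sum_truncLeOne_le [DecidableEq ι] (hξ : iIndepFun ξ μ)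
    (hint : ∀ i, Integrable (ξ i) μ) (hint2 : ∀ i, Integrable (fun ω => ξ i ω ^ 2) μ)
    (hmean : ∀ i, ∫ ω, ξ i ω ∂μ ≤ 0) (i : ι) :
    ∫ ω, ξ i ω ^ 2 * exp (∑ k, truncLeOne (ξ k ω)) ∂μ
      ≤ exp ((exp 1 - 2) * ∑ k, ∫ ω, ξ k ω ^ 2 ∂μ) * (exp 1 * ∫ ω, ξ i ω ^ 2 ∂μ) := by
  have hfac : ∫ ω, ξ i ω ^ 2 * exp (∑ k, truncLeOne (ξ k ω)) ∂μ
      = (∫ ω, ξ i ω ^ 2 * exp (truncLeOne (ξ i ω)) ∂μ)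
        * ∏ k ∈ univ.erase i, ∫ ω, exp (truncLeOne (ξ k ω)) ∂μ := by
    rw [← hξ.integral_comp_mul_prod_erase (fun k => (hint k).aemeasurable)
      (f := fun x => x ^ 2 * exp (truncLeOne x)) (g := fun _ x => exp (truncLeOne x))
      (by fun_prop) (fun _ => by fun_prop) i]
    refine integral_congr_ae (ae_of_all _ fun ω => ?_)
    simp only [exp_sum, ← mul_prod_erase univ _ (mem_univ i)]
    ring
  rw [hfac, mul_comm]
  exact mul_le_mul (prod_integral_exp_truncLeOne_le hint hint2 hmean _)
    (integral_sq_mul_exp_truncLeOne_le (hint i).aemeasurable (hint2 i))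
    (integral_nonneg fun ω => mul_nonneg (sq_nonneg _) (exp_pos _).le) (exp_pos _).le

theorem integral_mul_mul_exp_sum_truncLeOne_le_of_ne [DecidableEq ι] (hξ : iIndepFun ξ μ)
    (hint : ∀ i, Integrable (ξ i) μ) (hint2 : ∀ i, Integrable (fun ω => ξ i ω ^ 2) μ)
    (hmean : ∀ i, ∫ ω, ξ i ω ∂μ = 0) {i j : ι} (hij : i ≠ j) :
    ∫ ω, ξ i ω * ξ j ω * exp (∑ k, truncLeOne (ξ k ω)) ∂μ
      ≤ exp ((exp 1 - 2) * ∑ k, ∫ ω, ξ k ω ^ 2 ∂μ) *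
        ((exp 1 - 1) ^ 2 * (∫ ω, ξ i ω ^ 2 ∂μ) * ∫ ω, ξ j ω ^ 2 ∂μ) := by
  set a := fun k => ∫ ω, ξ k ω * exp (truncLeOne (ξ k ω)) ∂μ
  set P := ∏ k ∈ (univ.erase i).erase j, ∫ ω, exp (truncLeOne (ξ k ω)) ∂μ
  have hfac : ∫ ω, ξ i ω * ξ j ω * exp (∑ k, truncLeOne (ξ k ω)) ∂μ = a i * (a j * P) := by
    rw [← hξ.integral_comp_mul_comp_mul_prod_erase (fun k => (hint k).aemeasurable)
      (f := fun x => x * exp (truncLeOne x)) (f' := fun x => x * exp (truncLeOne x))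
      (g := fun _ x => exp (truncLeOne x))
      (by fun_prop) (by fun_prop) (fun _ => by fun_prop) hij]
    refine integral_congr_ae (ae_of_all _ fun ω => ?_)
    simp only [exp_sum, ← mul_prod_erase univ _ (mem_univ i),
      ← mul_prod_erase (univ.erase i) _ (mem_erase.2 ⟨hij.symm, mem_univ j⟩)]
    ring
  have hP0 : 0 ≤ P := prod_nonneg fun k _ => integral_nonneg fun ω => (exp_pos _).le
  have he : 0 ≤ exp 1 - 1 := by linarith [exp_one_gt_d9]
  calc ∫ ω, ξ i ω * ξ j ω * exp (∑ k, truncLeOne (ξ k ω)) ∂μ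
      ≤ |a i| * (|a j| * P) := hfac ▸ (le_abs_self _).trans_eq (by
        rw [abs_mul, abs_mul, abs_of_nonneg hP0])
    _ ≤ ((exp 1 - 1) * ∫ ω, ξ i ω ^ 2 ∂μ) *
        (((exp 1 - 1) * ∫ ω, ξ j ω ^ 2 ∂μ) * exp ((exp 1 - 2) * ∑ k, ∫ ω, ξ k ω ^ 2 ∂μ)) := by
      gcongr
      · exact abs_integral_mul_exp_truncLeOne_le (hint i) (hint2 i) (hmean i)
      · exact abs_integral_mul_exp_truncLeOne_le (hint j) (hint2 j) (hmean j)
      · exact prod_integral_exp_truncLeOne_le hint hint2 (fun k => (hmean k).le) _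
    _ = _ := by ring

theorem integral_sq_sum_mul_exp_sum_truncLeOne_le (hξ : iIndepFun ξ μ)
    (hint : ∀ i, Integrable (ξ i) μ) (hint2 : ∀ i, Integrable (fun ω => ξ i ω ^ 2) μ)
    (hmean : ∀ i, ∫ ω, ξ i ω ∂μ = 0) :
    ∫ ω, (∑ i, ξ i ω) ^ 2 * exp (∑ k, truncLeOne (ξ k ω)) ∂μ
      ≤ exp ((exp 1 - 2) * ∑ k, ∫ ω, ξ k ω ^ 2 ∂μ) *
        (exp 1 * ∑ k, ∫ ω, ξ k ω ^ 2 ∂μ + (exp 1 - 1) ^ 2 * (∑ k, ∫ ω, ξ k ω ^ 2 ∂μ) ^ 2) := by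
  classical
  have hint' := integrable_mul_mul_exp_sum_truncLeOne hint hint2
  calc ∫ ω, (∑ i, ξ i ω) ^ 2 * exp (∑ k, truncLeOne (ξ k ω)) ∂μ
      = ∑ i, ∑ j, ∫ ω, ξ i ω * ξ j ω * exp (∑ k, truncLeOne (ξ k ω)) ∂μ := by
        simp_rw [sq, sum_mul_sum, sum_mul]
        rw [integral_finsetSum _ fun i _ => integrable_finsetSum _ fun j _ => hint' i j]
        exact sum_congr rfl fun i _ => integral_finsetSum _ fun j _ => hint' i j
    _ ≤ ∑ i, ∑ j, exp ((exp 1 - 2) * ∑ k, ∫ ω, ξ k ω ^ 2 ∂μ) *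
        ((if i = j then exp 1 * ∫ ω, ξ i ω ^ 2 ∂μ else 0)
          + (exp 1 - 1) ^ 2 * (∫ ω, ξ i ω ^ 2 ∂μ) * ∫ ω, ξ j ω ^ 2 ∂μ) := by
        gcongr with i _ j _
        rcases eq_or_ne i j with rfl | hij
        · have hdiag := integral_sq_mul_exp_sum_truncLeOne_le hξ hint hint2
            (fun k => (hmean k).le) i
          simp only [← sq, if_true]
          exact hdiag.trans (mul_le_mul_of_nonneg_left (le_add_of_nonneg_right (by positivity))
            (exp_pos _).le)
        · simpa only [if_neg hij, zero_add]
            using integral_mul_mul_exp_sum_truncLeOne_le_of_ne hξ hint hint2 hmean hij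
    _ = _ := by
        simp only [← mul_sum, ← sum_mul, sum_add_distrib, sum_ite_eq, mem_univ, if_true]
        ring

end Family

theorem truncated_exp_moment_bounds_general {Ω : Type*} [MeasurableSpace Ω] (μ : Measure Ω)
    [IsProbabilityMeasure μ] (n : ℕ) (ξ : Fin n → Ω → ℝ)
    (hindep : iIndepFun ξ μ)
    (hint : ∀ i, Integrable (ξ i) μ) (hint2 : ∀ i, Integrable (fun ω => ξ i ω ^ 2) μ)
    (hmean : ∀ i, ∫ ω, ξ i ω ∂μ = 0)
    (hvar : ∑ i, ∫ ω, (ξ i ω) ^ 2 ∂μ = 1) :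
    (∫ ω, Real.exp (∑ i, (if ξ i ω ≤ 1 then ξ i ω else 0)) ∂μ ≤
        Real.exp (Real.exp 1 - 2)) ∧
      (∫ ω, (∑ i, ξ i ω) ^ 2 * Real.exp (∑ i, (if ξ i ω ≤ 1 then ξ i ω else 0)) ∂μ ≤
        2.06 * Real.exp 1 + 2.06 * (Real.exp 1 - 1) ^ 2) ∧
      2.06 * Real.exp 1 + 2.06 * (Real.exp 1 - 1) ^ 2 < 3.42 ^ 2 := by
  have hexp := integral_exp_sum_truncLeOne_le hindep hint hint2 fun i => (hmean i).le
  have hsq := integral_sq_sum_mul_exp_sum_truncLeOne_le hindep hint hint2 hmean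
  rw [hvar, mul_one] at hexp hsq
  refine ⟨hexp, hsq.trans ?_, by nlinarith [Real.exp_one_lt_d9, Real.exp_one_gt_d9]⟩
  calc Real.exp (Real.exp 1 - 2) * (Real.exp 1 * 1 + (Real.exp 1 - 1) ^ 2 * 1 ^ 2)
      = Real.exp (Real.exp 1 - 2) * (Real.exp 1 + (Real.exp 1 - 1) ^ 2) := by ring
    _ ≤ 2.06 * (Real.exp 1 + (Real.exp 1 - 1) ^ 2) := by
        gcongr
        exact exp_exp_one_sub_two_le
    _ = 2.06 * Real.exp 1 + 2.06 * (Real.exp 1 - 1) ^ 2 := by ring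

theorem truncated_exp_moment_bounds {Ω : Type*} [MeasurableSpace Ω] (μ : Measure Ω)
    [IsProbabilityMeasure μ] (n : ℕ) (ξ : Fin n → Ω → ℝ)
    (hmeas : ∀ i, Measurable (ξ i))
    (hindep : iIndepFun ξ μ)
    (hint : ∀ i, Integrable (ξ i) μ) (hint2 : ∀ i, Integrable (fun ω => ξ i ω ^ 2) μ)
    (hmean : ∀ i, ∫ ω, ξ i ω ∂μ = 0)
    (hvar : ∑ i, ∫ ω, (ξ i ω) ^ 2 ∂μ = 1) :
    (∫ ω, Real.exp (∑ i, (if ξ i ω ≤ 1 then ξ i ω else 0)) ∂μ ≤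
        Real.exp (Real.exp 1 - 2)) ∧
      (∫ ω, (∑ i, ξ i ω) ^ 2 * Real.exp (∑ i, (if ξ i ω ≤ 1 then ξ i ω else 0)) ∂μ ≤
        2.06 * Real.exp 1 + 2.06 * (Real.exp 1 - 1) ^ 2) ∧
      2.06 * Real.exp 1 + 2.06 * (Real.exp 1 - 1) ^ 2 < 3.42 ^ 2 :=
  truncated_exp_moment_bounds_general μ n ξ hindep hint hint2 hmean hvar
end

section
/- Let X_1,…,X_n be independent real random variables, g_i Borel functions with E g_i(X_i) = 0 and Σ_{i=1}^n E g_i(X_i)^2 = 1, W = Σ g_i(X_i), T = W + Δ for a random variable Δ = Δ(X_1,…,X_n), and for each i let Δ_i be a random variable such that X_i is independent of (Δ_i, W − g_i(X_i)). Let δ > 0 satisfy Σ_{i=1}^n E[ |g_i(X_i)| min(δ, |g_i(X_i)|) ] ≥ 1/2. Then sup_z |P(T ≤ z) − P(W ≤ z)| ≤ 4δ + E|WΔ| + Σ_{i=1}^n E|g_i(X_i)(Δ − Δ_i)|. -/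
open MeasureTheory ProbabilityTheory Filter Topology

/-!
Write `ξᵢ = gᵢ(Xᵢ)` and let `f` be the Stein test function equal to `w - (a + b)/2` on
`[a - δ, b + δ]` and constant outside. Since `f` is monotone with slope `1` on `[a - δ, b + δ]`,
`1{a ≤ W ≤ b} ∑ᵢ |ξᵢ| min(δ, |ξᵢ|) ≤ ∑ᵢ ξᵢ (f(W) - f(W - ξᵢ))` pointwise. The right side has
expectation `E[W f(W)] - ∑ᵢ E[ξᵢ f(W - ξᵢ)]`. The first term is at most `δ + E|W(b - a)|/2`. In
the second, `f` may be replaced by the function `fᵢ` built from the leave-one-out endpoints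
`(aᵢ, bᵢ)`, at cost `E|ξᵢ|(|a - aᵢ| + |b - bᵢ|)/2`, and `E[ξᵢ fᵢ(W - ξᵢ)] = 0` by independence.
The weight `B = ∑ᵢ |ξᵢ| min(δ, |ξᵢ|)` has mean at least `1/2` and variance at most `δ²`, so
`P(a ≤ W ≤ b) ≤ 2 E[B; a ≤ W ≤ b] + E(1 - 2B)⁺` costs one more `δ`.

For `T = W + Δ`, `P(T ≤ z) - P(W ≤ z)` is controlled by the probability that `W` lies between
`z` and `z - Δ`. Truncating `Δ` at a level `M` with `P(|Δ| > M) ≤ δ` keeps all endpoints bounded,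
which makes every expectation above finite, for the price of the fourth `δ`.
-/

/-- `w` clamped to `[p, q]`; for `q < p` it is the constant `q`. -/
noncomputable def clamp (p q w : ℝ) : ℝ := min (max w p) q

/-- `centeredClamp (a - δ) (b + δ)` is the test function `f` above. -/
noncomputable def centeredClamp (p q w : ℝ) : ℝ := clamp p q w - (p + q) / 2

section Clamp

lemma clamp_of_mem {p q w : ℝ} (hp : p ≤ w) (hq : w ≤ q) : clamp p q w = w := by
  rw [clamp, max_eq_left hp, min_eq_left hq]

lemma monotone_clamp (p q : ℝ) : Monotone (clamp p q) :=
  fun _ _ h => min_le_min_right q (max_le_max_right p h)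

lemma abs_clamp_sub_clamp_le (p q u v : ℝ) : |clamp p q u - clamp p q v| ≤ |u - v| := by
  simpa [clamp, Real.dist_eq] using ((LipschitzWith.id.max_const p).min_const q).dist_le_mul u v

lemma abs_clamp_neg_le {M : ℝ} (hM : 0 ≤ M) (d : ℝ) : |clamp (-M) M d| ≤ M :=
  abs_le.2 ⟨le_min (le_max_right _ _) (by linarith), min_le_right _ _⟩

lemma abs_clamp_neg_le_abs {M : ℝ} (hM : 0 ≤ M) (d : ℝ) : |clamp (-M) M d| ≤ |d| := by
  simpa [clamp_of_mem (neg_nonpos.2 hM) hM] using abs_clamp_sub_clamp_le (-M) M d 0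

@[fun_prop]
lemma Measurable.clamp {α : Type*} [MeasurableSpace α] {p q w : α → ℝ} (hp : Measurable p)
    (hq : Measurable q) (hw : Measurable w) :
    Measurable fun x => _root_.clamp (p x) (q x) (w x) := by
  unfold _root_.clamp; fun_prop

/-- For `y ≤ x` the increment `φ x - φ y` lies in `[0, x - y]`. -/
lemma Monotone.abs_sub_sub_half_le {φ : ℝ → ℝ} (hmono : Monotone φ) (hlip : LipschitzWith 1 φ)
    (x y : ℝ) : |φ x - φ y - (x - y) / 2| ≤ |x - y| / 2 := by
  wlog hxy : y ≤ x generalizing x y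
  · rw [← abs_neg, abs_sub_comm x y]
    convert this y x (le_of_not_ge hxy) using 2
    ring
  have hinc : φ x - φ y ≤ x - y := by
    have := hlip.dist_le_mul x y
    rw [Real.dist_eq, Real.dist_eq, NNReal.coe_one, one_mul,
      abs_of_nonneg (sub_nonneg.2 hxy)] at this
    exact (le_abs_self _).trans this
  rw [abs_of_nonneg (sub_nonneg.2 hxy), abs_le]
  constructor <;> linarith [sub_nonneg.2 (hmono hxy)]

lemma abs_centeredClamp_sub_le (p q p' q' w : ℝ) :
    |centeredClamp p q w - centeredClamp p' q' w| ≤ (|p - p'| + |q - q'|) / 2 := by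
  have hp : |centeredClamp p q w - centeredClamp p' q w| ≤ |p - p'| / 2 := by
    convert Monotone.abs_sub_sub_half_le (φ := fun p => clamp p q w)
      (fun _ _ h => min_le_min_right q (max_le_max_left w h))
      ((LipschitzWith.id.const_max w).min_const q) p p' using 2
    simp only [centeredClamp]
    ring
  have hq : |centeredClamp p' q w - centeredClamp p' q' w| ≤ |q - q'| / 2 := by
    convert Monotone.abs_sub_sub_half_le (φ := fun q => clamp p' q w)
      (fun _ _ h => min_le_min_left _ h) (LipschitzWith.id.const_min _) q q' using 2
    simp only [centeredClamp]
    ring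
  linarith [abs_sub_le (centeredClamp p q w) (centeredClamp p' q w) (centeredClamp p' q' w)]

lemma abs_centeredClamp_sub_add_le (a b δ w : ℝ) :
    |centeredClamp (a - δ) (b + δ) w| ≤ |b - a| / 2 + |δ| := by
  have h0 : centeredClamp (a - δ) (a - δ) w = 0 := by
    simp [centeredClamp, clamp]
  have := abs_centeredClamp_sub_le (a - δ) (b + δ) (a - δ) (a - δ) w
  rw [h0, sub_zero, sub_self, abs_zero, zero_add,
    show b + δ - (a - δ) = (b - a) + 2 * δ by ring] at this
  have h2 : |2 * δ| = 2 * |δ| := by rw [abs_mul, abs_two]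
  linarith [abs_add_le (b - a) (2 * δ)]

lemma centeredClamp_sub_centeredClamp (p q u v : ℝ) :
    centeredClamp p q u - centeredClamp p q v = clamp p q u - clamp p q v := by
  simp only [centeredClamp]
  ring

lemma mul_sub_centeredClamp_nonneg (p q u x : ℝ) :
    0 ≤ x * (centeredClamp p q u - centeredClamp p q (u - x)) := by
  rw [centeredClamp_sub_centeredClamp]
  rcases le_total 0 x with hx | hx
  · exact mul_nonneg hx (sub_nonneg.2 (monotone_clamp p q (by linarith)))
  · exact mul_nonneg_of_nonpos_of_nonpos hx (sub_nonpos.2 (monotone_clamp p q (by linarith)))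

/-- The test function has slope `1` on `[a - δ, b + δ] ⊇ [u - δ, u + δ]`. -/
lemma abs_mul_min_le_mul_sub_centeredClamp {a b δ u : ℝ} (hδ : 0 ≤ δ) (ha : a ≤ u) (hb : u ≤ b)
    (x : ℝ) :
    |x| * min δ |x| ≤
      x * (centeredClamp (a - δ) (b + δ) u - centeredClamp (a - δ) (b + δ) (u - x)) := by
  rw [centeredClamp_sub_centeredClamp, clamp_of_mem (by linarith) (by linarith)]
  rcases le_total 0 x with hx | hx
  · have h0 : 0 ≤ min δ x := le_min hδ hx
    have hstep : clamp (a - δ) (b + δ) (u - x) ≤ u - min δ x :=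
      (monotone_clamp _ _ (by linarith [min_le_right δ x])).trans_eq
        (clamp_of_mem (by linarith [min_le_left δ x]) (by linarith))
    rw [abs_of_nonneg hx]
    nlinarith
  · have h0 : 0 ≤ min δ (-x) := le_min hδ (by linarith)
    have hstep : u + min δ (-x) ≤ clamp (a - δ) (b + δ) (u - x) :=
      (clamp_of_mem (by linarith) (by linarith [min_le_left δ (-x)])).symm.trans_le
        (monotone_clamp _ _ (by linarith [min_le_right δ (-x)]))
    rw [abs_of_nonpos hx]
    nlinarith

@[fun_prop]
lemma Measurable.centeredClamp {α : Type*} [MeasurableSpace α] {p q w : α → ℝ}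
    (hp : Measurable p) (hq : Measurable q) (hw : Measurable w) :
    Measurable fun x => _root_.centeredClamp (p x) (q x) (w x) := by
  unfold _root_.centeredClamp; fun_prop

end Clamp

section FiniteMeasure

variable {Ω : Type*} [MeasurableSpace Ω] {μ : Measure Ω} [IsFiniteMeasure μ]

lemma exists_measureReal_lt_abs_le {Y : Ω → ℝ} (hY : Measurable Y) {ε : ℝ} (hε : 0 < ε) :
    ∃ M, 0 ≤ M ∧ μ.real {ω | M < |Y ω|} ≤ ε := by
  have hlim : Tendsto (fun M : ℝ => μ {ω | M < |Y ω|}) atTop (𝓝 0) := by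
    have hempty : ⋂ M : ℝ, {ω | M < |Y ω|} = ∅ :=
      Set.eq_empty_of_forall_notMem fun ω hω => lt_irrefl |Y ω| (Set.mem_iInter.1 hω |Y ω|)
    have := tendsto_measure_iInter_atTop (μ := μ) (s := fun M : ℝ => {ω | M < |Y ω|})
      (fun M => (measurableSet_lt measurable_const hY.abs).nullMeasurableSet)
      (fun _ _ hMN _ hω => hMN.trans_lt hω) ⟨0, measure_ne_top μ _⟩
    rwa [hempty, measure_empty] at this
  have hlim' : Tendsto (fun M : ℝ => μ.real {ω | M < |Y ω|}) atTop (𝓝 0) :=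
    (ENNReal.tendsto_toReal ENNReal.zero_ne_top).comp hlim
  obtain ⟨M, hMε, hM⟩ := ((hlim'.eventually (ge_mem_nhds hε)).and (eventually_ge_atTop 0)).exists
  exact ⟨M, hM, hMε⟩

lemma measureReal_le_add_add {s t u v : Set Ω} (h : s ⊆ t ∪ u ∪ v) :
    μ.real s ≤ μ.real t + μ.real u + μ.real v :=
  (measureReal_mono h).trans <|
    (measureReal_union_le _ _).trans (add_le_add_left (measureReal_union_le _ _) _)

/-- On `E`, `1 ≤ 2B + (1 - 2B)⁺`. -/
lemma measureReal_le_two_mul_setIntegral_add {B : Ω → ℝ} (hB : Integrable B μ) {E : Set Ω}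
    (hE : MeasurableSet E) :
    μ.real E ≤ 2 * ∫ ω in E, B ω ∂μ + ∫ ω, max (1 - 2 * B ω) 0 ∂μ := by
  have hpos : Integrable (fun ω => max (1 - 2 * B ω) 0) μ :=
    ((integrable_const 1).sub (hB.const_mul 2)).pos_part
  calc μ.real E = ∫ _ in E, (1 : ℝ) ∂μ := by simp
    _ ≤ ∫ ω in E, (2 * B ω + max (1 - 2 * B ω) 0) ∂μ :=
        setIntegral_mono_on (integrable_const 1).integrableOn
          ((hB.const_mul 2).add hpos).integrableOn hE
          fun ω _ => by linarith [le_max_left (1 - 2 * B ω) 0]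
    _ ≤ 2 * ∫ ω in E, B ω ∂μ + ∫ ω, max (1 - 2 * B ω) 0 ∂μ := by
        rw [integral_add (hB.const_mul 2).integrableOn hpos.integrableOn, integral_const_mul]
        linarith [setIntegral_le_integral (s := E) hpos (ae_of_all _ fun ω => le_max_right _ _)]

end FiniteMeasure

section ProbabilityMeasure

variable {Ω ι : Type*} [MeasurableSpace Ω] {μ : Measure Ω} [IsProbabilityMeasure μ]

lemma integral_abs_sub_le_of_variance_le {X : Ω → ℝ} (hX : MemLp X 2 μ) {σ : ℝ} (hσ : 0 < σ)
    (hvar : Var[X; μ] ≤ σ ^ 2) : ∫ ω, |X ω - μ[X]| ∂μ ≤ σ := by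
  have hsq : Integrable (fun ω => (X ω - μ[X]) ^ 2) μ := (hX.sub (memLp_const _)).integrable_sq
  -- `2 σ |y| ≤ y² + σ²`
  have hpt : ∀ ω, |X ω - μ[X]| ≤ ((X ω - μ[X]) ^ 2 / σ + σ) / 2 := fun ω => by
    rw [← sq_abs, div_add' _ _ _ hσ.ne', div_div, le_div_iff₀ (by positivity)]
    nlinarith [sq_nonneg (|X ω - μ[X]| - σ)]
  calc ∫ ω, |X ω - μ[X]| ∂μ ≤ ∫ ω, ((X ω - μ[X]) ^ 2 / σ + σ) / 2 ∂μ :=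
        integral_mono ((hX.integrable one_le_two).sub (integrable_const _)).abs
          ((hsq.div_const σ).add (integrable_const σ) |>.div_const 2) hpt
    _ = (Var[X; μ] / σ + σ) / 2 := by
        rw [integral_div, integral_add (hsq.div_const σ) (integrable_const σ), integral_div,
          integral_const, ← variance_eq_integral hX.aemeasurable]
        simp
    _ ≤ σ := by
        have : Var[X; μ] / σ ≤ σ := (div_le_iff₀ hσ).2 (by nlinarith)
        linarith

lemma variance_sum_le [Fintype ι] {X : ι → Ω → ℝ} (hX : ∀ i, MemLp (X i) 2 μ)
    (hind : Pairwise fun i j => X i ⟂ᵢ[μ] X j) :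
    Var[fun ω => ∑ i, X i ω; μ] ≤ ∑ i, ∫ ω, X i ω ^ 2 ∂μ := by
  have hsum := IndepFun.variance_sum (s := Finset.univ) (fun i _ => hX i)
    fun i _ j _ hij => hind hij
  rw [show (fun ω => ∑ i, X i ω) = ∑ i, X i by ext; simp, hsum]
  exact Finset.sum_le_sum fun i _ => variance_le_expectation_sq (hX i).1

/-- Pointwise `(1 - 2B)⁺ ≤ 2 (E B - B)⁺ = (E B - B) + |B - E B|` once `E B ≥ 1/2`. -/
lemma integral_posPart_one_sub_two_mul_le {B : Ω → ℝ} (hB : Integrable B μ) (hβ : 1 / 2 ≤ μ[B]) :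
    ∫ ω, max (1 - 2 * B ω) 0 ∂μ ≤ ∫ ω, |B ω - μ[B]| ∂μ := by
  have hdev : Integrable (fun ω => μ[B] - B ω) μ := (integrable_const _).sub hB
  have habs : Integrable (fun ω => |B ω - μ[B]|) μ := (hB.sub (integrable_const _)).abs
  calc ∫ ω, max (1 - 2 * B ω) 0 ∂μ ≤ ∫ ω, ((μ[B] - B ω) + |B ω - μ[B]|) ∂μ :=
        integral_mono ((integrable_const 1).sub (hB.const_mul 2)).pos_part
          (hdev.add habs) fun ω => by
            rw [abs_sub_comm]
            exact max_le (by linarith [le_abs_self (μ[B] - B ω)])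
              (by linarith [neg_abs_le (μ[B] - B ω)])
    _ = ∫ ω, |B ω - μ[B]| ∂μ := by
        rw [integral_add hdev habs, integral_sub (integrable_const _) hB,
          integral_const]
        simp

end ProbabilityMeasure

section SteinTerms

variable {Ω : Type*} [MeasurableSpace Ω] {μ : Measure Ω} {δ : ℝ}

lemma integrable_abs_mul_min {Y : Ω → ℝ} (hY : MemLp Y 2 μ) (hδ : 0 ≤ δ) :
    Integrable (fun ω => |Y ω| * min δ |Y ω|) μ :=
  hY.integrable_sq.mono' ((by fun_prop : Continuous fun x : ℝ => |x| * min δ |x|)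
      |>.comp_aestronglyMeasurable hY.1)
    (ae_of_all _ fun ω => by
      rw [Real.norm_eq_abs, abs_of_nonneg (by positivity), sq, ← abs_mul_abs_self]
      exact mul_le_mul_of_nonneg_left (min_le_right _ _) (abs_nonneg _))

lemma MeasureTheory.Integrable.mul_centeredClamp {Y a b V : Ω → ℝ} (hY : Integrable Y μ)
    (ha : Measurable a) (hb : Measurable b) (hV : Measurable V) {K : ℝ}
    (hK : ∀ ω, |b ω - a ω| ≤ K) :
    Integrable (fun ω => Y ω * centeredClamp (a ω - δ) (b ω + δ) (V ω)) μ :=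
  hY.mul_bdd (c := K / 2 + |δ|) (by fun_prop : Measurable _).aestronglyMeasurable
    (ae_of_all _ fun ω => (abs_centeredClamp_sub_add_le _ _ _ _).trans (by linarith [hK ω]))

lemma setIntegral_sum_abs_mul_min_le {ι : Type*} [Fintype ι] {ξ : ι → Ω → ℝ} {W a b : Ω → ℝ}
    (hξm : ∀ i, Measurable (ξ i)) (hξ : ∀ i, MemLp (ξ i) 2 μ) (hW : Measurable W)
    (ha : Measurable a) (hb : Measurable b) (hδ : 0 ≤ δ) :
    ∫ ω in {ω | a ω ≤ W ω ∧ W ω ≤ b ω}, ∑ i, |ξ i ω| * min δ |ξ i ω| ∂μ ≤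
      ∑ i, ∫ ω, ξ i ω * (centeredClamp (a ω - δ) (b ω + δ) (W ω)
        - centeredClamp (a ω - δ) (b ω + δ) (W ω - ξ i ω)) ∂μ := by
  set G : ι → Ω → ℝ := fun i ω => ξ i ω * (centeredClamp (a ω - δ) (b ω + δ) (W ω)
    - centeredClamp (a ω - δ) (b ω + δ) (W ω - ξ i ω)) with hGdef
  have hG : ∀ i, Integrable (G i) μ := fun i =>
    (hξ i).integrable_sq.mono' (by fun_prop : Measurable (G i)).aestronglyMeasurable
      (ae_of_all _ fun ω => by
        rw [hGdef, Real.norm_eq_abs, abs_mul, centeredClamp_sub_centeredClamp, sq,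
          ← abs_mul_abs_self]
        refine mul_le_mul_of_nonneg_left ((abs_clamp_sub_clamp_le _ _ _ _).trans_eq ?_)
          (abs_nonneg _)
        rw [sub_sub_cancel])
  have hE : MeasurableSet {ω | a ω ≤ W ω ∧ W ω ≤ b ω} :=
    (measurableSet_le ha hW).inter (measurableSet_le hW hb)
  calc _ ≤ ∫ ω in {ω | a ω ≤ W ω ∧ W ω ≤ b ω}, ∑ i, G i ω ∂μ :=
        setIntegral_mono_on
          (integrable_finsetSum _ fun i _ => integrable_abs_mul_min (hξ i) hδ).integrableOn
          (integrable_finsetSum _ fun i _ => hG i).integrableOn hE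
          fun ω hω => Finset.sum_le_sum fun i _ =>
            abs_mul_min_le_mul_sub_centeredClamp hδ hω.1 hω.2 _
    _ ≤ ∫ ω, ∑ i, G i ω ∂μ :=
        setIntegral_le_integral (integrable_finsetSum _ fun i _ => hG i)
          (ae_of_all _ fun ω => Finset.sum_nonneg fun i _ => mul_sub_centeredClamp_nonneg _ _ _ _)
    _ = _ := integral_finsetSum _ fun i _ => hG i

lemma sum_integral_mul_sub_centeredClamp {ι : Type*} [Fintype ι] {ξ : ι → Ω → ℝ}
    {W a b : Ω → ℝ} (hξm : ∀ i, Measurable (ξ i)) (hξ : ∀ i, Integrable (ξ i) μ)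
    (hW : ∀ ω, W ω = ∑ i, ξ i ω) (hWm : Measurable W) (ha : Measurable a) (hb : Measurable b)
    {K : ℝ} (hK : ∀ ω, |b ω - a ω| ≤ K) :
    ∑ i, ∫ ω, ξ i ω * (centeredClamp (a ω - δ) (b ω + δ) (W ω)
        - centeredClamp (a ω - δ) (b ω + δ) (W ω - ξ i ω)) ∂μ =
      ∫ ω, W ω * centeredClamp (a ω - δ) (b ω + δ) (W ω) ∂μ
        - ∑ i, ∫ ω, ξ i ω * centeredClamp (a ω - δ) (b ω + δ) (W ω - ξ i ω) ∂μ := by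
  have h₁ := fun i => (hξ i).mul_centeredClamp (δ := δ) ha hb hWm hK
  have h₂ := fun i => (hξ i).mul_centeredClamp (δ := δ) (V := fun ω => W ω - ξ i ω) ha hb
    (hWm.sub (hξm i)) hK
  simp_rw [mul_sub]
  rw [Finset.sum_congr rfl fun i _ => integral_sub (h₁ i) (h₂ i), Finset.sum_sub_distrib,
    ← integral_finsetSum _ fun i _ => h₁ i]
  simp_rw [← Finset.sum_mul, ← hW]

lemma integral_mul_centeredClamp_le {W a b D : Ω → ℝ} (hWi : Integrable W μ) (hW : Measurable W)
    (ha : Measurable a) (hb : Measurable b) (hD : Integrable (fun ω => W ω * D ω) μ)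
    (hbaD : ∀ ω, |b ω - a ω| ≤ |D ω|) :
    ∫ ω, W ω * centeredClamp (a ω - δ) (b ω + δ) (W ω) ∂μ ≤
      |δ| * ∫ ω, |W ω| ∂μ + (∫ ω, |W ω * D ω| ∂μ) / 2 := by
  have hpt : ∀ ω, |W ω * centeredClamp (a ω - δ) (b ω + δ) (W ω)| ≤
      |δ| * |W ω| + |W ω * D ω| / 2 := fun ω => by
    rw [abs_mul, abs_mul]
    nlinarith [abs_centeredClamp_sub_add_le (a ω) (b ω) δ (W ω), abs_nonneg (W ω), hbaD ω]
  have hmaj : Integrable (fun ω => |δ| * |W ω| + |W ω * D ω| / 2) μ :=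
    (hWi.abs.const_mul _).add (hD.abs.div_const 2)
  calc _ ≤ ∫ ω, (|δ| * |W ω| + |W ω * D ω| / 2) ∂μ :=
        integral_mono (hmaj.mono' (by fun_prop : Measurable _).aestronglyMeasurable
          (ae_of_all _ hpt)) hmaj fun ω => (le_abs_self _).trans (hpt ω)
    _ = _ := by
        rw [integral_add (hWi.abs.const_mul _) (hD.abs.div_const 2), integral_const_mul,
          integral_div]

/-- The same term with the leave-one-out endpoints `a', b'` vanishes by independence; the
right-hand side is the cost of the replacement. -/
lemma neg_integral_mul_centeredClamp_le {ξ V a b a' b' D : Ω → ℝ} (hξ : Integrable ξ μ)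
    (hmean : μ[ξ] = 0) (hind : ξ ⟂ᵢ[μ] fun ω => (a' ω, b' ω, V ω)) (hV : Measurable V)
    (ha : Measurable a) (hb : Measurable b) (ha' : Measurable a') (hb' : Measurable b') {K : ℝ}
    (hK : ∀ ω, |b ω - a ω| ≤ K) (hK' : ∀ ω, |b' ω - a' ω| ≤ K)
    (hD : Integrable (fun ω => ξ ω * D ω) μ) (hmaj : ∀ ω, |a ω - a' ω| + |b ω - b' ω| ≤ |D ω|) :
    -∫ ω, ξ ω * centeredClamp (a ω - δ) (b ω + δ) (V ω) ∂μ ≤ (∫ ω, |ξ ω * D ω| ∂μ) / 2 := by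
  have hc := hξ.mul_centeredClamp (δ := δ) ha hb hV hK
  have hc' := hξ.mul_centeredClamp (δ := δ) ha' hb' hV hK'
  have hind' : ξ ⟂ᵢ[μ] fun ω => centeredClamp (a' ω - δ) (b' ω + δ) (V ω) :=
    hind.comp measurable_id
      (by fun_prop : Measurable fun x : ℝ × ℝ × ℝ => centeredClamp (x.1 - δ) (x.2.1 + δ) x.2.2)
  have h0 : ∫ ω, ξ ω * centeredClamp (a' ω - δ) (b' ω + δ) (V ω) ∂μ = 0 := by
    rw [hind'.integral_fun_mul_eq_mul_integral hξ.aestronglyMeasurable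
      (by fun_prop : Measurable _).aestronglyMeasurable, hmean, zero_mul]
  have hpt : ∀ ω, ξ ω * (centeredClamp (a' ω - δ) (b' ω + δ) (V ω)
      - centeredClamp (a ω - δ) (b ω + δ) (V ω)) ≤ |ξ ω * D ω| / 2 := fun ω => by
    have h := abs_centeredClamp_sub_le (a' ω - δ) (b' ω + δ) (a ω - δ) (b ω + δ) (V ω)
    rw [sub_sub_sub_cancel_right, add_sub_add_right_eq_sub, abs_sub_comm (a' ω),
      abs_sub_comm (b' ω)] at h
    rw [abs_mul]
    calc _ ≤ |ξ ω| * |centeredClamp (a' ω - δ) (b' ω + δ) (V ω)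
          - centeredClamp (a ω - δ) (b ω + δ) (V ω)| := (le_abs_self _).trans (abs_mul _ _).le
      _ ≤ |ξ ω| * (|D ω| / 2) :=
          mul_le_mul_of_nonneg_left (h.trans (by linarith [hmaj ω])) (abs_nonneg _)
      _ = _ := by ring
  calc _ = ∫ ω, ξ ω * (centeredClamp (a' ω - δ) (b' ω + δ) (V ω)
        - centeredClamp (a ω - δ) (b ω + δ) (V ω)) ∂μ := by
        simp_rw [mul_sub]
        rw [integral_sub hc' hc, h0, zero_sub]
    _ ≤ ∫ ω, |ξ ω * D ω| / 2 ∂μ := by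
        refine integral_mono ?_ (hD.abs.div_const 2) hpt
        simp_rw [mul_sub]
        exact hc'.sub hc
    _ = _ := integral_div _ _

end SteinTerms

section Concentration

variable {Ω ι : Type*} [MeasurableSpace Ω] {μ : Measure Ω} [IsProbabilityMeasure μ] [Fintype ι]
  {ξ : ι → Ω → ℝ} {δ : ℝ}

lemma integral_abs_sum_le_one (hξ : ∀ i, MemLp (ξ i) 2 μ)
    (hind : Pairwise fun i j => ξ i ⟂ᵢ[μ] ξ j) (hmean : ∀ i, μ[ξ i] = 0)
    (hvar : ∑ i, ∫ ω, ξ i ω ^ 2 ∂μ ≤ 1) :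
    ∫ ω, |∑ i, ξ i ω| ∂μ ≤ 1 := by
  have hmean0 : ∫ ω, ∑ i, ξ i ω ∂μ = 0 := by
    rw [integral_finsetSum _ fun i _ => (hξ i).integrable one_le_two]
    simp [hmean]
  have h := integral_abs_sub_le_of_variance_le (memLp_finsetSum _ fun i _ => hξ i) one_pos
    (by simpa using (variance_sum_le hξ hind).trans hvar)
  simpa only [hmean0, sub_zero] using h

lemma integral_abs_sum_abs_mul_min_sub_le (hξ : ∀ i, MemLp (ξ i) 2 μ)
    (hind : Pairwise fun i j => ξ i ⟂ᵢ[μ] ξ j) (hvar : ∑ i, ∫ ω, ξ i ω ^ 2 ∂μ ≤ 1)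
    (hδ : 0 < δ) :
    ∫ ω, |∑ i, |ξ i ω| * min δ |ξ i ω|
      - ∫ ω', ∑ i, |ξ i ω'| * min δ |ξ i ω'| ∂μ| ∂μ ≤ δ := by
  have hφ : Continuous fun x : ℝ => |x| * min δ |x| := by fun_prop
  have hη : ∀ i, MemLp (fun ω => |ξ i ω| * min δ |ξ i ω|) 2 μ := fun i =>
    ((hξ i).const_mul δ).of_le (hφ.comp_aestronglyMeasurable (hξ i).1) (ae_of_all _ fun ω => by
      rw [Real.norm_eq_abs, Real.norm_eq_abs, abs_of_nonneg (by positivity), abs_mul,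
        abs_of_pos hδ, mul_comm δ]
      exact mul_le_mul_of_nonneg_left (min_le_left _ _) (abs_nonneg _))
  have hvarB : Var[fun ω => ∑ i, |ξ i ω| * min δ |ξ i ω|; μ] ≤ δ ^ 2 :=
    calc _ ≤ ∑ i, ∫ ω, (|ξ i ω| * min δ |ξ i ω|) ^ 2 ∂μ :=
          variance_sum_le hη fun i j hij => (hind hij).comp hφ.measurable hφ.measurable
      _ ≤ ∑ i, δ ^ 2 * ∫ ω, ξ i ω ^ 2 ∂μ := Finset.sum_le_sum fun i _ => by
          rw [← integral_const_mul]
          refine integral_mono (hη i).integrable_sq ((hξ i).integrable_sq.const_mul _) fun ω => ?_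
          rw [mul_pow, sq_abs, mul_comm]
          gcongr
          exact min_le_left _ _
      _ ≤ δ ^ 2 := by
          rw [← Finset.mul_sum]
          exact mul_le_of_le_one_right (sq_nonneg δ) hvar
  exact integral_abs_sub_le_of_variance_le (memLp_finsetSum _ fun i _ => hη i) hδ hvarB

theorem measureReal_le_of_leaveOneOut {W D : Ω → ℝ} {Di : ι → Ω → ℝ}
    (hξm : ∀ i, Measurable (ξ i)) (hξ : ∀ i, MemLp (ξ i) 2 μ)
    (hind : Pairwise fun i j => ξ i ⟂ᵢ[μ] ξ j) (hmean : ∀ i, μ[ξ i] = 0)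
    (hvar : ∑ i, ∫ ω, ξ i ω ^ 2 ∂μ ≤ 1) (hW : ∀ ω, W ω = ∑ i, ξ i ω) (hδ : 0 < δ)
    (hcond : 1 / 2 ≤ ∑ i, ∫ ω, |ξ i ω| * min δ |ξ i ω| ∂μ)
    (hD : Integrable (fun ω => W ω * D ω) μ) (hDi : ∀ i, Integrable (fun ω => ξ i ω * Di i ω) μ)
    {a b : Ω → ℝ} {ai bi : ι → Ω → ℝ} (ha : Measurable a) (hb : Measurable b)
    (hai : ∀ i, Measurable (ai i)) (hbi : ∀ i, Measurable (bi i))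
    {K : ℝ} (hK : ∀ ω, |b ω - a ω| ≤ K) (hKi : ∀ i ω, |bi i ω - ai i ω| ≤ K)
    (hloo : ∀ i, ξ i ⟂ᵢ[μ] fun ω => (ai i ω, bi i ω, W ω - ξ i ω))
    (hbaD : ∀ ω, |b ω - a ω| ≤ |D ω|)
    (hbaDi : ∀ i ω, |a ω - ai i ω| + |b ω - bi i ω| ≤ |Di i ω|) :
    μ.real {ω | a ω ≤ W ω ∧ W ω ≤ b ω} ≤
      3 * δ + ∫ ω, |W ω * D ω| ∂μ + ∑ i, ∫ ω, |ξ i ω * Di i ω| ∂μ := by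
  have hW' : W = fun ω => ∑ i, ξ i ω := funext hW
  have hWm : Measurable W := by rw [hW']; fun_prop
  have hξi : ∀ i, Integrable (ξ i) μ := fun i => (hξ i).integrable one_le_two
  have hWi : Integrable W μ := by rw [hW']; exact integrable_finsetSum _ fun i _ => hξi i
  have hweight : ∀ i, Integrable (fun ω => |ξ i ω| * min δ |ξ i ω|) μ := fun i =>
    integrable_abs_mul_min (hξ i) hδ.le
  have hB : Integrable (fun ω => ∑ i, |ξ i ω| * min δ |ξ i ω|) μ :=
    integrable_finsetSum _ fun i _ => hweight i
  have hposPart : ∫ ω, max (1 - 2 * ∑ i, |ξ i ω| * min δ |ξ i ω|) 0 ∂μ ≤ δ :=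
    (integral_posPart_one_sub_two_mul_le hB
      (by rwa [integral_finsetSum _ fun i _ => hweight i])).trans
      (integral_abs_sum_abs_mul_min_sub_le hξ hind hvar hδ)
  have hE : MeasurableSet {ω | a ω ≤ W ω ∧ W ω ≤ b ω} :=
    (measurableSet_le ha hWm).inter (measurableSet_le hWm hb)
  have hdouble := measureReal_le_two_mul_setIntegral_add hB hE
  have hcapture := setIntegral_sum_abs_mul_min_le (μ := μ) hξm hξ hWm ha hb hδ.le
  have hstein := sum_integral_mul_sub_centeredClamp (μ := μ) (δ := δ) hξm hξi hW hWm ha hb hK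
  have hWf := integral_mul_centeredClamp_le (δ := δ) hWi hWm ha hb hD hbaD
  have hWabs : |δ| * ∫ ω, |W ω| ∂μ ≤ δ := by
    rw [abs_of_pos hδ, hW']
    exact mul_le_of_le_one_right hδ.le (integral_abs_sum_le_one hξ hind hmean hvar)
  have hloo' := Finset.sum_le_sum fun i (_ : i ∈ Finset.univ) =>
    neg_integral_mul_centeredClamp_le (δ := δ) (hξi i) (hmean i) (hloo i) (hWm.sub (hξm i))
      ha hb (hai i) (hbi i) hK (hKi i) (hDi i) (hbaDi i)
  rw [Finset.sum_neg_distrib, ← Finset.sum_div] at hloo'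
  linarith

theorem measureReal_between_clamp_le {W Δ : Ω → ℝ} {Δi : ι → Ω → ℝ}
    (hξm : ∀ i, Measurable (ξ i)) (hξ : ∀ i, MemLp (ξ i) 2 μ)
    (hind : Pairwise fun i j => ξ i ⟂ᵢ[μ] ξ j) (hmean : ∀ i, μ[ξ i] = 0)
    (hvar : ∑ i, ∫ ω, ξ i ω ^ 2 ∂μ ≤ 1) (hW : ∀ ω, W ω = ∑ i, ξ i ω) (hδ : 0 < δ)
    (hcond : 1 / 2 ≤ ∑ i, ∫ ω, |ξ i ω| * min δ |ξ i ω| ∂μ)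
    (hΔ : Measurable Δ) (hΔi : ∀ i, Measurable (Δi i))
    (hloo : ∀ i, ξ i ⟂ᵢ[μ] fun ω => (Δi i ω, W ω - ξ i ω))
    (hD : Integrable (fun ω => W ω * Δ ω) μ)
    (hDi : ∀ i, Integrable (fun ω => ξ i ω * (Δ ω - Δi i ω)) μ) {M : ℝ} (hM : 0 ≤ M) (z : ℝ) :
    μ.real {ω | z ≤ W ω ∧ W ω ≤ z - clamp (-M) M (Δ ω)} ≤
        3 * δ + ∫ ω, |W ω * Δ ω| ∂μ + ∑ i, ∫ ω, |ξ i ω * (Δ ω - Δi i ω)| ∂μ ∧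
      μ.real {ω | z - clamp (-M) M (Δ ω) ≤ W ω ∧ W ω ≤ z} ≤
        3 * δ + ∫ ω, |W ω * Δ ω| ∂μ + ∑ i, ∫ ω, |ξ i ω * (Δ ω - Δi i ω)| ∂μ := by
  have hwidth : ∀ d, |z - clamp (-M) M d - z| ≤ M ∧ |z - (z - clamp (-M) M d)| ≤ M :=
    fun d => by simpa using abs_clamp_neg_le hM d
  have hmaj : ∀ d, |z - clamp (-M) M d - z| ≤ |d| ∧ |z - (z - clamp (-M) M d)| ≤ |d| :=
    fun d => by simpa using abs_clamp_neg_le_abs hM d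
  have hmaji : ∀ i ω, |clamp (-M) M (Δ ω) - clamp (-M) M (Δi i ω)| ≤ |Δ ω - Δi i ω| :=
    fun i ω => abs_clamp_sub_clamp_le _ _ _ _
  constructor
  · exact measureReal_le_of_leaveOneOut hξm hξ hind hmean hvar hW hδ hcond hD hDi (K := M)
      (a := fun _ => z) (b := fun ω => z - clamp (-M) M (Δ ω))
      (ai := fun _ _ => z) (bi := fun i ω => z - clamp (-M) M (Δi i ω))
      measurable_const (by fun_prop) (fun _ => measurable_const) (fun i => by fun_prop)
      (fun ω => (hwidth _).1) (fun i ω => (hwidth _).1)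
      (fun i => (hloo i).comp measurable_id
        (by fun_prop : Measurable fun p : ℝ × ℝ => (z, z - clamp (-M) M p.1, p.2)))
      (fun ω => (hmaj _).1) (fun i ω => by simpa [abs_sub_comm] using hmaji i ω)
  · exact measureReal_le_of_leaveOneOut hξm hξ hind hmean hvar hW hδ hcond hD hDi (K := M)
      (a := fun ω => z - clamp (-M) M (Δ ω)) (b := fun _ => z)
      (ai := fun i ω => z - clamp (-M) M (Δi i ω)) (bi := fun _ _ => z)
      (by fun_prop) measurable_const (fun i => by fun_prop) (fun _ => measurable_const)
      (fun ω => (hwidth _).2) (fun i ω => (hwidth _).2)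
      (fun i => (hloo i).comp measurable_id
        (by fun_prop : Measurable fun p : ℝ × ℝ => (z - clamp (-M) M p.1, z, p.2)))
      (fun ω => (hmaj _).2) (fun i ω => by simpa [abs_sub_comm] using hmaji i ω)

end Concentration

section Truncation

variable {Ω : Type*} {W Δ : Ω → ℝ} {M z : ℝ}

lemma setOf_add_le_subset :
    {ω | W ω + Δ ω ≤ z} ⊆ {ω | W ω ≤ z} ∪ {ω | z ≤ W ω ∧ W ω ≤ z - clamp (-M) M (Δ ω)} ∪
      {ω | M < |Δ ω|} := fun ω (hω : W ω + Δ ω ≤ z) => by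
  by_cases hWz : W ω ≤ z
  · exact Or.inl (Or.inl hWz)
  by_cases hΔM : |Δ ω| ≤ M
  · refine Or.inl (Or.inr ⟨(not_le.1 hWz).le, ?_⟩)
    rw [clamp_of_mem (abs_le.1 hΔM).1 (abs_le.1 hΔM).2]
    linarith
  · exact Or.inr (not_le.1 hΔM)

lemma setOf_le_subset :
    {ω | W ω ≤ z} ⊆ {ω | W ω + Δ ω ≤ z} ∪ {ω | z - clamp (-M) M (Δ ω) ≤ W ω ∧ W ω ≤ z} ∪
      {ω | M < |Δ ω|} := fun ω (hω : W ω ≤ z) => by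
  by_cases hTz : W ω + Δ ω ≤ z
  · exact Or.inl (Or.inl hTz)
  by_cases hΔM : |Δ ω| ≤ M
  · refine Or.inl (Or.inr ⟨?_, hω⟩)
    rw [clamp_of_mem (abs_le.1 hΔM).1 (abs_le.1 hΔM).2]
    linarith [not_le.1 hTz]
  · exact Or.inr (not_le.1 hΔM)

variable [MeasurableSpace Ω] {μ : Measure Ω} [IsFiniteMeasure μ]

lemma abs_measureReal_add_le_sub_le {R ε : ℝ}
    (h₁ : μ.real {ω | z ≤ W ω ∧ W ω ≤ z - clamp (-M) M (Δ ω)} ≤ R)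
    (h₂ : μ.real {ω | z - clamp (-M) M (Δ ω) ≤ W ω ∧ W ω ≤ z} ≤ R)
    (hM : μ.real {ω | M < |Δ ω|} ≤ ε) :
    |μ.real {ω | W ω + Δ ω ≤ z} - μ.real {ω | W ω ≤ z}| ≤ R + ε := by
  have hle := measureReal_le_add_add (μ := μ)
    (setOf_add_le_subset (W := W) (Δ := Δ) (M := M) (z := z))
  have hge := measureReal_le_add_add (μ := μ)
    (setOf_le_subset (W := W) (Δ := Δ) (M := M) (z := z))
  rw [abs_sub_le_iff]
  constructor <;> linarith

end Truncation

theorem randomized_concentration_inequality_general {Ω : Type*} [MeasurableSpace Ω] (μ : Measure Ω)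
    [IsProbabilityMeasure μ] (n : ℕ) (X : Fin n → Ω → ℝ) (g : Fin n → ℝ → ℝ)
    (hmeasX : ∀ i, Measurable (X i)) (hmeasg : ∀ i, Measurable (g i))
    (hindep : iIndepFun X μ)
    (hint2 : ∀ i, Integrable (fun ω => (g i (X i ω)) ^ 2) μ)
    (hmean : ∀ i, ∫ ω, g i (X i ω) ∂μ = 0)
    (hvar : ∑ i, ∫ ω, (g i (X i ω)) ^ 2 ∂μ = 1)
    (W Δ T : Ω → ℝ) (hW : ∀ ω, W ω = ∑ i, g i (X i ω)) (hΔ : Measurable Δ)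
    (hT : ∀ ω, T ω = W ω + Δ ω)
    (Δi : Fin n → Ω → ℝ) (hmeasΔi : ∀ i, Measurable (Δi i))
    (hindepΔi : ∀ i, IndepFun (X i) (fun ω => (Δi i ω, W ω - g i (X i ω))) μ)
    (hintWΔ : Integrable (fun ω => W ω * Δ ω) μ)
    (hintgΔ : ∀ i, Integrable (fun ω => g i (X i ω) * (Δ ω - Δi i ω)) μ)
    (δ : ℝ) (hδ : 0 < δ)
    (hcond : ∑ i, ∫ ω, |g i (X i ω)| * min δ |g i (X i ω)| ∂μ ≥ 1 / 2) :
    ∀ z : ℝ, |(μ {ω | T ω ≤ z}).toReal - (μ {ω | W ω ≤ z}).toReal| ≤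
      4 * δ + ∫ ω, |W ω * Δ ω| ∂μ + ∑ i, ∫ ω, |g i (X i ω) * (Δ ω - Δi i ω)| ∂μ := by
  intro z
  have hξ : ∀ i, Measurable fun ω => g i (X i ω) := fun i => (hmeasg i).comp (hmeasX i)
  obtain ⟨M, hM, hMδ⟩ := exists_measureReal_lt_abs_le (μ := μ) hΔ hδ
  obtain ⟨h₁, h₂⟩ := measureReal_between_clamp_le hξ
    (fun i => (memLp_two_iff_integrable_sq (hξ i).aestronglyMeasurable).2 (hint2 i))
    (fun i j hij => (hindep.indepFun hij).comp (hmeasg i) (hmeasg j)) hmean hvar.le hW hδ hcond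
    hΔ hmeasΔi (fun i => (hindepΔi i).comp (hmeasg i) measurable_id) hintWΔ hintgΔ hM z
  have hTW : {ω | T ω ≤ z} = {ω | W ω + Δ ω ≤ z} := by simp only [hT]
  change |μ.real _ - μ.real _| ≤ _
  rw [hTW]
  linarith [abs_measureReal_add_le_sub_le h₁ h₂ hMδ]

theorem randomized_concentration_inequality {Ω : Type*} [MeasurableSpace Ω] (μ : Measure Ω)
    [IsProbabilityMeasure μ] (n : ℕ) (X : Fin n → Ω → ℝ) (g : Fin n → ℝ → ℝ)
    (hmeasX : ∀ i, Measurable (X i)) (hmeasg : ∀ i, Measurable (g i))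
    (hindep : iIndepFun X μ)
    (hint : ∀ i, Integrable (fun ω => g i (X i ω)) μ)
    (hint2 : ∀ i, Integrable (fun ω => (g i (X i ω)) ^ 2) μ)
    (hmean : ∀ i, ∫ ω, g i (X i ω) ∂μ = 0)
    (hvar : ∑ i, ∫ ω, (g i (X i ω)) ^ 2 ∂μ = 1)
    (W Δ T : Ω → ℝ) (hW : ∀ ω, W ω = ∑ i, g i (X i ω)) (hΔ : Measurable Δ)
    (hT : ∀ ω, T ω = W ω + Δ ω)
    (Δi : Fin n → Ω → ℝ) (hmeasΔi : ∀ i, Measurable (Δi i))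
    (hindepΔi : ∀ i, IndepFun (X i) (fun ω => (Δi i ω, W ω - g i (X i ω))) μ)
    (hintWΔ : Integrable (fun ω => W ω * Δ ω) μ)
    (hintgΔ : ∀ i, Integrable (fun ω => g i (X i ω) * (Δ ω - Δi i ω)) μ)
    (δ : ℝ) (hδ : 0 < δ)
    (hcond : ∑ i, ∫ ω, |g i (X i ω)| * min δ |g i (X i ω)| ∂μ ≥ 1 / 2) :
    ∀ z : ℝ, |(μ {ω | T ω ≤ z}).toReal - (μ {ω | W ω ≤ z}).toReal| ≤
      4 * δ + ∫ ω, |W ω * Δ ω| ∂μ + ∑ i, ∫ ω, |g i (X i ω) * (Δ ω - Δi i ω)| ∂μ :=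
  randomized_concentration_inequality_general μ n X g hmeasX hmeasg hindep hint2 hmean hvar W Δ T hW
    hΔ hT Δi hmeasΔi hindepΔi hintWΔ hintgΔ δ hδ hcond
end
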